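/- arXiv:1412.5727 — 6 statements merged into one kernel-verified Lean document; each statement's English description precedes it below -/
import Mathlib

section
/- If H is a subgraph of a finite simple graph G (both having at least one vertex), then the maximum real root of the matching polynomial of H is at most the maximum real root of the matching polynomial of G. -/
open Polynomial

/-- Number of matchings with exactly `k` edges in `G`. -/
noncomputable def matchingCount {V : Type*} [Fintype V] (G : SimpleGraph V) (k : ℕ) : ℕ :=
  Nat.card {s : Finset (Sym2 V) // s.card = k ∧ (∀ e ∈ s, e ∈ G.edgeSet) ∧
    ∀ e ∈ s, ∀ f ∈ s, e ≠ f → ∀ x : V, x ∈ e → x ∉ f}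

/-- The matching polynomial `m(G,x) = ∑ (-1)^k m_k(G) x^(n-2k)`. -/
noncomputable def matchPoly {V : Type*} [Fintype V] (G : SimpleGraph V) : Polynomial ℝ :=
  ∑ k ∈ Finset.range (Fintype.card V + 1),
    Polynomial.C ((-1 : ℝ) ^ k * (matchingCount G k : ℝ)) *
      Polynomial.X ^ (Fintype.card V - 2 * k)

/-- The maximum real root `t(G)` of the matching polynomial. -/
noncomputable def maxRoot {V : Type*} [Fintype V] (G : SimpleGraph V) : ℝ :=
  sSup {x : ℝ | (matchPoly G).eval x = 0}

/-!
An interlacing argument. Write `μ S` for the matching polynomial of `G` restricted to a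
vertex set `S`. The vertex recurrence `μ S = X * μ (S - u) - ∑_{v ~ u} μ (S - u - v)` shows, by
induction on `|S|`, that the Wronskian `μ (S - u) * (μ S)' - (μ (S - u))' * μ S` equals
`μ (S - u) ^ 2` plus Wronskians of smaller sets, hence is nonnegative on all of `ℝ`. So
`μ S / μ (S - u)` is nondecreasing to the right of the largest root `s` of `μ (S - u)`, which
forces `μ S (s) ≤ 0`; thus `μ S` has a real root `≥ s`, i.e. deleting a vertex does not increase
the largest root. By the edge recurrence `μ_{G - uv} S = μ_G S + μ_G (S - u - v)`, whose two terms
are positive beyond the largest root of `μ_G S`, deleting an edge does not increase it either.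
Finally, mapping `H` into `V` only multiplies its matching polynomial by a power of `X`.
-/

namespace Polynomial

open Filter Topology

noncomputable def alternatingPoly (n : ℕ) : (ℕ → ℝ) →ₗ[ℝ] ℝ[X] where
  toFun c := ∑ k ∈ Finset.range (n + 1), C ((-1) ^ k * c k) * X ^ (n - 2 * k)
  map_add' c d := by
    simp only [Pi.add_apply, mul_add, C_add, add_mul, Finset.sum_add_distrib]
  map_smul' a c := by
    simp only [Pi.smul_apply, smul_eq_mul, RingHom.id_apply, Finset.smul_sum, smul_eq_C_mul,
      mul_left_comm, C_mul, mul_assoc]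

lemma alternatingPoly_apply (n : ℕ) (c : ℕ → ℝ) :
    alternatingPoly n c = ∑ k ∈ Finset.range (n + 1), C ((-1) ^ k * c k) * X ^ (n - 2 * k) :=
  rfl

lemma X_mul_alternatingPoly {n : ℕ} {c : ℕ → ℝ} (hc : ∀ k, n < 2 * k → c k = 0) :
    X * alternatingPoly n c = alternatingPoly (n + 1) c := by
  rw [alternatingPoly_apply, alternatingPoly_apply, Finset.sum_range_succ _ (n + 1),
    hc (n + 1) (by omega), Finset.mul_sum]
  simp only [mul_zero, map_zero, zero_mul, add_zero]
  refine Finset.sum_congr rfl fun k _ => ?_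
  by_cases hk : n < 2 * k
  · simp [hc k hk]
  · rw [mul_left_comm, ← pow_succ', show n - 2 * k + 1 = n + 1 - 2 * k by omega]

lemma X_pow_mul_alternatingPoly {n : ℕ} {c : ℕ → ℝ} (hc : ∀ k, n < 2 * k → c k = 0) (j : ℕ) :
    X ^ j * alternatingPoly n c = alternatingPoly (n + j) c := by
  induction j with
  | zero => simp
  | succ j ih =>
    rw [pow_succ', mul_assoc, ih, X_mul_alternatingPoly fun k hk => hc k (by omega), add_assoc]

lemma alternatingPoly_add_two {n : ℕ} {c d : ℕ → ℝ} (hd₀ : d 0 = 0) (hd : ∀ k, d (k + 1) = c k)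
    (hc : ∀ k, n < 2 * k → c k = 0) :
    alternatingPoly (n + 2) d = -alternatingPoly n c := by
  rw [alternatingPoly_apply, alternatingPoly_apply, Finset.sum_range_succ', hd₀,
    Finset.sum_range_succ _ (n + 1), hd, hc (n + 1) (by omega)]
  simp only [mul_zero, map_zero, zero_mul, add_zero, ← Finset.sum_neg_distrib, hd]
  refine Finset.sum_congr rfl fun k _ => ?_
  rw [show n + 2 - 2 * (k + 1) = n - 2 * k by omega, pow_succ, mul_assoc, neg_one_mul, C_mul,
    C_mul, C_neg]
  ring

lemma alternatingPoly_monic {n : ℕ} {c : ℕ → ℝ} (hc₀ : c 0 = 1)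
    (hc : ∀ k, n < 2 * k → c k = 0) : (alternatingPoly n c).Monic := by
  rw [alternatingPoly_apply]
  refine monic_of_natDegree_le_of_coeff_eq_one n ?_ ?_
  · refine natDegree_sum_le_of_forall_le _ _ fun k _ => (natDegree_C_mul_X_pow_le _ _).trans ?_
    omega
  · rw [finsetSum_coeff, Finset.sum_eq_single 0]
    · simp [hc₀]
    · intro k _ hk
      by_cases hnk : n < 2 * k
      · simp [hc k hnk]
      · rw [coeff_C_mul_X_pow, if_neg (by omega)]
    · simp

lemma alternatingPoly_eq_sub {n : ℕ} {a b c : ℕ → ℝ} (h₀ : a 0 = b 0)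
    (h : ∀ k, a (k + 1) = b (k + 1) + c k) (hc : ∀ k, n < 2 * k → c k = 0) :
    alternatingPoly (n + 2) a = alternatingPoly (n + 2) b - alternatingPoly n c := by
  have hd : alternatingPoly (n + 2) (a - b) = -alternatingPoly n c :=
    alternatingPoly_add_two (by simp [h₀]) (fun k => by simp [h k]) hc
  rw [← sub_add_cancel a b, map_add, hd, neg_add_eq_sub]

lemma Monic.exists_isRoot_ge_of_eval_nonpos {p : ℝ[X]} (hp : p.Monic) {x : ℝ}
    (hx : p.eval x ≤ 0) : ∃ r, x ≤ r ∧ p.IsRoot r := by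
  have hdeg : 0 < p.degree := by
    refine natDegree_pos_iff_degree_pos.mp (hp.natDegree_pos.mpr ?_)
    rintro rfl
    simp only [eval_one] at hx
    linarith
  obtain ⟨y, hy, hxy⟩ := ((tendsto_atTop_of_leadingCoeff_nonneg p hdeg
    (by simp [hp.leadingCoeff])).eventually_ge_atTop 0 |>.and (eventually_ge_atTop x)).exists
  obtain ⟨r, hr, hpr⟩ := intermediate_value_Icc hxy p.continuousOn ⟨hx, hy⟩
  exact ⟨r, hr.1, hpr⟩

lemma eval_nonpos_of_wronskian_nonneg {P Q : ℝ[X]} {s : ℝ}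
    (hW : ∀ x, s < x → 0 ≤ (wronskian Q P).eval x) (hQs : Q.eval s = 0)
    (hQ : ∀ x, s < x → 0 < Q.eval x) : P.eval s ≤ 0 := by
  set g : ℝ → ℝ := fun x => P.eval x / Q.eval x
  have hg : ∀ x, s < x → HasDerivAt g ((wronskian Q P).eval x / Q.eval x ^ 2) x := by
    intro x hx
    refine ((P.hasDerivAt x).div (Q.hasDerivAt x) (hQ x hx).ne').congr_deriv ?_
    unfold wronskian
    rw [eval_sub, eval_mul, eval_mul]
    ring
  have hmono : MonotoneOn g (Set.Ioi s) := by
    refine monotoneOn_of_hasDerivWithinAt_nonneg (convex_Ioi s)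
      (fun x hx => (hg x hx).continuousAt.continuousWithinAt)
      (fun x hx => (hg x (interior_subset hx)).hasDerivWithinAt)
      (fun x hx => div_nonneg (hW x (interior_subset hx)) (sq_nonneg _))
  -- monotonicity gives `P ≤ g (s + 1) * Q` on `(s, s + 1]`; now let `x → s⁺`, where `Q → 0`
  have hle : ∀ᶠ x in 𝓝[>] s, 0 ≤ g (s + 1) * Q.eval x - P.eval x := by
    filter_upwards [Ioc_mem_nhdsGT (lt_add_one s)] with x hx
    have hgx : g x ≤ g (s + 1) := hmono hx.1 (lt_add_one s) hx.2
    have hQx := hQ x hx.1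
    rw [div_le_iff₀ hQx] at hgx
    linarith
  have hlim : Tendsto (fun x => g (s + 1) * Q.eval x - P.eval x) (𝓝[>] s)
      (𝓝 (g (s + 1) * Q.eval s - P.eval s)) :=
    ((continuous_const.mul Q.continuous).sub P.continuous).continuousAt.continuousWithinAt
  have := ge_of_tendsto hlim hle
  rw [hQs, mul_zero, zero_sub] at this
  linarith

noncomputable def maxRealRoot (p : ℝ[X]) : ℝ :=
  sSup {x | p.eval x = 0}

variable {p : ℝ[X]} {x : ℝ}

lemma le_maxRealRoot (hp : p ≠ 0) (hx : p.IsRoot x) : x ≤ p.maxRealRoot :=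
  le_csSup (finite_setOfPred_isRoot hp).bddAbove hx

lemma maxRealRoot_le {a : ℝ} (hne : ∃ x, p.IsRoot x) (h : ∀ x, p.IsRoot x → x ≤ a) :
    p.maxRealRoot ≤ a :=
  csSup_le hne h

lemma isRoot_maxRealRoot (hp : p ≠ 0) (hne : ∃ x, p.IsRoot x) : p.IsRoot p.maxRealRoot :=
  Set.Nonempty.csSup_mem hne (finite_setOfPred_isRoot hp)

lemma Monic.eval_pos_of_maxRealRoot_lt (hp : p.Monic) (hx : p.maxRealRoot < x) :
    0 < p.eval x := by
  by_contra! h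
  obtain ⟨r, hxr, hr⟩ := hp.exists_isRoot_ge_of_eval_nonpos h
  exact (le_maxRealRoot hp.ne_zero hr).not_gt (hx.trans_le hxr)

end Polynomial

lemma Finset.card_erase_erase_add_two {α : Type*} [DecidableEq α] {S : Finset α} {u v : α}
    (huv : u ≠ v) (hu : u ∈ S) (hv : v ∈ S) : ((S.erase u).erase v).card + 2 = S.card := by
  rw [← card_erase_add_one hu, ← card_erase_add_one (mem_erase.mpr ⟨huv.symm, hv⟩)]

namespace SimpleGraph

open Finset

variable {V : Type*} (G : SimpleGraph V)

def IsMatchingFinset (s : Finset (Sym2 V)) : Prop :=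
  (∀ e ∈ s, e ∈ G.edgeSet) ∧ (s : Set (Sym2 V)).Pairwise fun e f => ∀ x ∈ e, x ∉ f

open Classical in
noncomputable def matchingsOn (S : Finset V) (k : ℕ) : Finset (Finset (Sym2 V)) :=
  (S.sym2.powersetCard k).filter G.IsMatchingFinset

noncomputable def matchingPolyOn (S : Finset V) : ℝ[X] :=
  alternatingPoly S.card fun k => (G.matchingsOn S k).card

variable {G}

lemma IsMatchingFinset.anti {s t : Finset (Sym2 V)} (ht : G.IsMatchingFinset t) (hst : s ⊆ t) :
    G.IsMatchingFinset s :=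
  ⟨fun e he => ht.1 e (hst he), ht.2.mono (coe_subset.mpr hst)⟩

lemma IsMatchingFinset.two_mul_card_le {s : Finset (Sym2 V)} {S : Finset V}
    (hs : G.IsMatchingFinset s) (hsS : s ⊆ S.sym2) : 2 * s.card ≤ S.card := by
  classical
  calc 2 * s.card = ∑ e ∈ s, e.toFinset.card := by
        rw [sum_congr rfl fun e he =>
          Sym2.card_toFinset_of_not_isDiag e (G.not_isDiag_of_mem_edgeSet (hs.1 e he)),
          sum_const, smul_eq_mul, mul_comm]
    _ = (s.biUnion Sym2.toFinset).card := by
        refine (card_biUnion fun e he f hf hef => ?_).symm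
        refine Finset.disjoint_left.mpr fun x hxe hxf => ?_
        exact hs.2 he hf hef x (Sym2.mem_toFinset.mp hxe) (Sym2.mem_toFinset.mp hxf)
    _ ≤ S.card := card_le_card <| biUnion_subset.mpr fun e he x hx =>
        mem_sym2_iff.mp (hsS he) x (Sym2.mem_toFinset.mp hx)

lemma mem_matchingsOn {S : Finset V} {k : ℕ} {s : Finset (Sym2 V)} :
    s ∈ G.matchingsOn S k ↔ s ⊆ S.sym2 ∧ s.card = k ∧ G.IsMatchingFinset s := by
  classical
  rw [matchingsOn, mem_filter, mem_powersetCard, and_assoc]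

lemma matchingsOn_zero (S : Finset V) : G.matchingsOn S 0 = {∅} := by
  ext s
  rw [mem_matchingsOn, card_eq_zero, mem_singleton]
  constructor
  · exact fun h => h.2.1
  · rintro rfl
    exact ⟨empty_subset _, rfl, by simp [IsMatchingFinset]⟩

lemma card_matchingsOn_eq_zero {S : Finset V} {k : ℕ} (hk : S.card < 2 * k) :
    (G.matchingsOn S k).card = 0 := by
  refine card_eq_zero.mpr (eq_empty_of_forall_notMem fun s hs => ?_)
  obtain ⟨hsS, hcard, hmatch⟩ := mem_matchingsOn.mp hs
  exact (hcard ▸ hmatch.two_mul_card_le hsS).not_gt hk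

lemma isMatchingFinset_deleteEdges_iff {s : Finset (Sym2 V)} {e : Sym2 V} :
    (G.deleteEdges {e}).IsMatchingFinset s ↔ G.IsMatchingFinset s ∧ e ∉ s := by
  simp only [IsMatchingFinset, edgeSet_deleteEdges, Set.mem_sdiff, Set.mem_singleton_iff]
  constructor
  · rintro ⟨h, hs⟩
    exact ⟨⟨fun f hf => (h f hf).1, hs⟩, fun he => (h e he).2 rfl⟩
  · rintro ⟨⟨h, hs⟩, he⟩
    exact ⟨fun f hf => ⟨h f hf, by rintro rfl; exact he hf⟩, hs⟩

lemma isMatchingFinset_map_iff {W : Type*} (f : W ↪ V) (H : SimpleGraph W) (s : Finset (Sym2 W)) :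
    (H.map f).IsMatchingFinset (s.map f.sym2Map) ↔ H.IsMatchingFinset s := by
  have hdisj : Function.onFun (fun e g : Sym2 V => ∀ x ∈ e, x ∉ g) f.sym2Map =
      fun e g => ∀ x ∈ e, x ∉ g := by
    funext e g
    simp only [Function.onFun, Function.Embedding.sym2Map_apply, Sym2.mem_map,
      forall_exists_index, and_imp, forall_apply_eq_imp_iff₂, not_exists, not_and,
      f.injective.eq_iff]
    exact propext ⟨fun h a ha hag => h a ha a hag rfl, fun h a ha b hb hba => h a ha (hba ▸ hb)⟩
  simp only [IsMatchingFinset, forall_mem_map, edgeSet_map, f.sym2Map.injective.mem_set_image,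
    coe_map, f.sym2Map.injective.injOn.pairwise_image, hdisj]

lemma matchingPolyOn_empty : G.matchingPolyOn ∅ = 1 := by
  simp [matchingPolyOn, alternatingPoly_apply, matchingsOn_zero]

lemma matchingPolyOn_monic (S : Finset V) : (G.matchingPolyOn S).Monic :=
  alternatingPoly_monic (by simp [matchingsOn_zero])
    fun _ hk => by simp [card_matchingsOn_eq_zero hk]

variable [DecidableEq V]

lemma IsMatchingFinset.insert {s : Finset (Sym2 V)} {e : Sym2 V}
    (hs : G.IsMatchingFinset s) (he : e ∈ G.edgeSet) (hdisj : ∀ f ∈ s, ∀ x ∈ e, x ∉ f) :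
    G.IsMatchingFinset (insert e s) := by
  refine ⟨fun f hf => ?_, ?_⟩
  · rcases mem_insert.mp hf with rfl | hf
    exacts [he, hs.1 f hf]
  · rw [coe_insert, Set.pairwise_insert]
    exact ⟨hs.2, fun f hf _ => ⟨hdisj f hf, fun x hxf hxe => hdisj f hf x hxe hxf⟩⟩

lemma subset_sym2_erase_iff {s : Finset (Sym2 V)} {S : Finset V} {u : V} :
    s ⊆ (S.erase u).sym2 ↔ s ⊆ S.sym2 ∧ ∀ e ∈ s, u ∉ e := by
  simp only [subset_iff, mem_sym2_iff, mem_erase]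
  grind

lemma card_filter_mem_matchingsOn {S : Finset V} {u v : V} (huv : G.Adj u v) (hu : u ∈ S)
    (hv : v ∈ S) (k : ℕ) :
    ((G.matchingsOn S (k + 1)).filter (s(u, v) ∈ ·)).card =
      (G.matchingsOn ((S.erase u).erase v) k).card := by
  have hout : ∀ s ∈ G.matchingsOn ((S.erase u).erase v) k, ∀ f ∈ s, ∀ x ∈ s(u, v), x ∉ f := by
    intro s hs f hf x hx hxf
    have := mem_sym2_iff.mp ((mem_matchingsOn.mp hs).1 hf) x hxf
    rcases Sym2.mem_iff.mp hx with rfl | rfl <;> simp at this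
  have hnot : ∀ s ∈ G.matchingsOn ((S.erase u).erase v) k, s(u, v) ∉ s :=
    fun s hs he => hout s hs _ he u (Sym2.mem_mk_left _ _) (Sym2.mem_mk_left _ _)
  refine card_nbij' (·.erase s(u, v)) (insert s(u, v)) ?_ ?_
    (fun s hs => insert_erase (mem_filter.mp hs).2) (fun s hs => erase_insert (hnot s hs))
  · intro s hs
    obtain ⟨hs, he⟩ := mem_filter.mp hs
    obtain ⟨hsS, hcard, hmatch⟩ := mem_matchingsOn.mp hs
    refine mem_matchingsOn.mpr ⟨fun f hf => mem_sym2_iff.mpr fun x hx => ?_,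
      by rw [card_erase_of_mem he, hcard, Nat.add_sub_cancel], hmatch.anti (erase_subset _ _)⟩
    obtain ⟨hfe, hf⟩ := mem_erase.mp hf
    have hdisj := hmatch.2 he hf (Ne.symm hfe)
    refine mem_erase.mpr ⟨?_, mem_erase.mpr ⟨?_, mem_sym2_iff.mp (hsS hf) x hx⟩⟩
    · rintro rfl
      exact hdisj x (Sym2.mem_mk_right _ _) hx
    · rintro rfl
      exact hdisj x (Sym2.mem_mk_left _ _) hx
  · intro s hs
    obtain ⟨hsS, hcard, hmatch⟩ := mem_matchingsOn.mp hs
    refine mem_filter.mpr ⟨mem_matchingsOn.mpr ⟨?_, ?_, hmatch.insert huv (hout s hs)⟩,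
      mem_insert_self _ _⟩
    · refine insert_subset (mem_sym2_iff.mpr fun x hx => ?_) (hsS.trans ?_)
      · rcases Sym2.mem_iff.mp hx with rfl | rfl
        exacts [hu, hv]
      · exact sym2_mono ((erase_subset _ _).trans (erase_subset _ _))
    · rw [card_insert_of_notMem (hnot s hs), hcard]

lemma card_matchingsOn_succ [DecidableRel G.Adj] {S : Finset V} {u : V} (hu : u ∈ S) (k : ℕ) :
    (G.matchingsOn S (k + 1)).card = (G.matchingsOn (S.erase u) (k + 1)).card +
      ∑ v ∈ {v ∈ S | G.Adj u v}, (G.matchingsOn ((S.erase u).erase v) k).card := by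
  rw [← card_filter_add_card_filter_not (p := fun s => ∀ e ∈ s, u ∉ e)]
  congr 1
  · congr 1
    ext s
    simp only [mem_filter, mem_matchingsOn, subset_sym2_erase_iff]
    tauto
  · have hcover : (G.matchingsOn S (k + 1)).filter (fun s => ¬∀ e ∈ s, u ∉ e) =
        ({v ∈ S | G.Adj u v}).biUnion fun v => (G.matchingsOn S (k + 1)).filter (s(u, v) ∈ ·) := by
      ext s
      simp only [mem_filter, mem_biUnion, not_forall, not_not]
      constructor
      · rintro ⟨hs, e, he, hue⟩
        obtain ⟨v, rfl⟩ := Sym2.mem_iff_exists.mp hue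
        obtain ⟨hsS, -, hmatch⟩ := mem_matchingsOn.mp hs
        exact ⟨v, ⟨mem_sym2_iff.mp (hsS he) v (Sym2.mem_mk_right _ _), hmatch.1 _ he⟩, hs, he⟩
      · rintro ⟨v, -, hs, he⟩
        exact ⟨hs, _, he, Sym2.mem_mk_left _ _⟩
    rw [hcover, card_biUnion]
    · exact sum_congr rfl fun v hv =>
        card_filter_mem_matchingsOn (mem_filter.mp hv).2 hu (mem_filter.mp hv).1 k
    · intro v _ w _ hvw
      refine Finset.disjoint_left.mpr fun s hsv hsw => ?_
      obtain ⟨hs, hv⟩ := mem_filter.mp hsv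
      exact (mem_matchingsOn.mp hs).2.2.2 hv (mem_filter.mp hsw).2
        (fun h => hvw (Sym2.congr_right.mp h)) u (Sym2.mem_mk_left _ _) (Sym2.mem_mk_left _ _)

lemma card_matchingsOn_deleteEdges {S : Finset V} {u v : V} (huv : G.Adj u v) (hu : u ∈ S)
    (hv : v ∈ S) (k : ℕ) :
    (G.matchingsOn S (k + 1)).card = ((G.deleteEdges {s(u, v)}).matchingsOn S (k + 1)).card +
      (G.matchingsOn ((S.erase u).erase v) k).card := by
  rw [← card_filter_add_card_filter_not (p := (s(u, v) ∈ ·)),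
    card_filter_mem_matchingsOn huv hu hv, add_comm]
  congr 2
  ext s
  simp only [mem_filter, mem_matchingsOn, isMatchingFinset_deleteEdges_iff]
  tauto

lemma matchingPolyOn_deleteEdges {S : Finset V} {u v : V} (huv : G.Adj u v) (hu : u ∈ S)
    (hv : v ∈ S) :
    (G.deleteEdges {s(u, v)}).matchingPolyOn S =
      G.matchingPolyOn S + G.matchingPolyOn ((S.erase u).erase v) := by
  have hcard := card_erase_erase_add_two huv.ne hu hv
  have := alternatingPoly_eq_sub (n := ((S.erase u).erase v).card)
    (a := fun k => (G.matchingsOn S k).card)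
    (b := fun k => ((G.deleteEdges {s(u, v)}).matchingsOn S k).card)
    (c := fun k => (G.matchingsOn ((S.erase u).erase v) k).card) (by simp [matchingsOn_zero])
    (fun k => by rw [card_matchingsOn_deleteEdges huv hu hv k, Nat.cast_add])
    fun _ hk => by simp [card_matchingsOn_eq_zero hk]
  rw [hcard] at this
  rw [matchingPolyOn, matchingPolyOn, matchingPolyOn, this]
  ring

lemma matchingPolyOn_eq_X_mul_sub_sum [DecidableRel G.Adj] {S : Finset V} {u : V} (hu : u ∈ S) :
    G.matchingPolyOn S = X * G.matchingPolyOn (S.erase u) -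
      ∑ v ∈ {v ∈ S | G.Adj u v}, G.matchingPolyOn ((S.erase u).erase v) := by
  rw [matchingPolyOn, matchingPolyOn,
    X_mul_alternatingPoly fun _ hk => by simp [card_matchingsOn_eq_zero hk], card_erase_add_one hu]
  rcases {v ∈ S | G.Adj u v}.eq_empty_or_nonempty with hN | ⟨w, hw⟩
  · rw [hN, sum_empty, sub_zero]
    congr 1
    funext k
    cases k with
    | zero => simp [matchingsOn_zero]
    | succ k => rw [card_matchingsOn_succ hu, hN, sum_empty, add_zero]
  obtain ⟨m, hm⟩ : ∃ m, S.card = m + 2 :=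
    ⟨_, (card_erase_erase_add_two (mem_filter.mp hw).2.ne hu (mem_filter.mp hw).1).symm⟩
  have hcard : ∀ v ∈ {v ∈ S | G.Adj u v}, ((S.erase u).erase v).card = m := fun v hv => by
    have := card_erase_erase_add_two (mem_filter.mp hv).2.ne hu (mem_filter.mp hv).1
    omega
  have := alternatingPoly_eq_sub (n := m)
    (a := fun k => (G.matchingsOn S k).card)
    (b := fun k => (G.matchingsOn (S.erase u) k).card)
    (c := ∑ v ∈ {v ∈ S | G.Adj u v}, fun k => ((G.matchingsOn ((S.erase u).erase v) k).card : ℝ))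
    (by simp [matchingsOn_zero])
    (fun k => by rw [card_matchingsOn_succ hu k, Nat.cast_add, Nat.cast_sum, Finset.sum_apply])
    fun k hk => by
      rw [Finset.sum_apply]
      exact sum_eq_zero fun v hv => by simp [card_matchingsOn_eq_zero (hcard v hv ▸ hk)]
  rw [hm, this, map_sum]
  refine congrArg _ (sum_congr rfl fun v hv => ?_)
  rw [matchingPolyOn, hcard v hv]

lemma wronskian_matchingPolyOn_erase [DecidableRel G.Adj] {S : Finset V} {u : V} (hu : u ∈ S) :
    wronskian (G.matchingPolyOn (S.erase u)) (G.matchingPolyOn S) =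
      G.matchingPolyOn (S.erase u) ^ 2 + ∑ v ∈ {v ∈ S | G.Adj u v},
        wronskian (G.matchingPolyOn ((S.erase u).erase v)) (G.matchingPolyOn (S.erase u)) := by
  rw [matchingPolyOn_eq_X_mul_sub_sum hu]
  simp only [wronskian, sum_sub_distrib, ← sum_mul, derivative_sub, derivative_mul, derivative_X,
    derivative_sum]
  ring

lemma eval_wronskian_matchingPolyOn_erase_nonneg {S : Finset V} {u : V} (hu : u ∈ S) (x : ℝ) :
    0 ≤ (wronskian (G.matchingPolyOn (S.erase u)) (G.matchingPolyOn S)).eval x := by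
  classical
  induction S using Finset.strongInduction generalizing u with
  | H S ih =>
    rw [wronskian_matchingPolyOn_erase hu, eval_add, eval_pow, eval_finsetSum]
    refine add_nonneg (sq_nonneg _) (sum_nonneg fun v hv => ?_)
    obtain ⟨hv, huv⟩ := mem_filter.mp hv
    exact ih _ (erase_ssubset hu) (mem_erase.mpr ⟨huv.ne', hv⟩)

lemma exists_isRoot_matchingPolyOn_ge {S : Finset V} {u : V} (hu : u ∈ S) :
    ∃ r, (G.matchingPolyOn S).IsRoot r ∧ (G.matchingPolyOn (S.erase u)).maxRealRoot ≤ r := by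
  classical
  induction S using Finset.strongInduction generalizing u with
  | H S ih =>
    rcases (S.erase u).eq_empty_or_nonempty with hS | ⟨w, hw⟩
    · have hN : {v ∈ S | G.Adj u v} = ∅ := filter_eq_empty_iff.mpr fun v hv huv =>
        (eq_empty_iff_forall_notMem.mp hS v) (mem_erase.mpr ⟨huv.ne', hv⟩)
      refine ⟨0, ?_, ?_⟩
      · simp [IsRoot, matchingPolyOn_eq_X_mul_sub_sum hu, hN]
      · simp [hS, matchingPolyOn_empty, maxRealRoot]
    · obtain ⟨r₀, hr₀, -⟩ := ih _ (erase_ssubset hu) hw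
      have hmax := isRoot_maxRealRoot (matchingPolyOn_monic _).ne_zero ⟨r₀, hr₀⟩
      have hP := eval_nonpos_of_wronskian_nonneg
        (fun x _ => eval_wronskian_matchingPolyOn_erase_nonneg hu x) hmax
        (fun x hx => (matchingPolyOn_monic _).eval_pos_of_maxRealRoot_lt hx)
      obtain ⟨r, hr, hroot⟩ := (matchingPolyOn_monic S).exists_isRoot_ge_of_eval_nonpos hP
      exact ⟨r, hroot, hr⟩

lemma exists_isRoot_matchingPolyOn {S : Finset V} (hS : S.Nonempty) :
    ∃ r, (G.matchingPolyOn S).IsRoot r :=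
  let ⟨_, hu⟩ := hS
  (exists_isRoot_matchingPolyOn_ge hu).imp fun _ h => h.1

lemma maxRealRoot_matchingPolyOn_erase_le {S : Finset V} {u : V} (hu : u ∈ S) :
    (G.matchingPolyOn (S.erase u)).maxRealRoot ≤ (G.matchingPolyOn S).maxRealRoot :=
  let ⟨_, hr, hle⟩ := exists_isRoot_matchingPolyOn_ge (G := G) hu
  hle.trans (le_maxRealRoot (matchingPolyOn_monic S).ne_zero hr)

lemma maxRealRoot_matchingPolyOn_deleteEdges_le {S : Finset V} {u v : V} (huv : G.Adj u v)
    (hu : u ∈ S) (hv : v ∈ S) :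
    ((G.deleteEdges {s(u, v)}).matchingPolyOn S).maxRealRoot ≤
      (G.matchingPolyOn S).maxRealRoot := by
  refine maxRealRoot_le (exists_isRoot_matchingPolyOn ⟨u, hu⟩) fun x hx => ?_
  by_contra! hlt
  have hS := (matchingPolyOn_monic S).eval_pos_of_maxRealRoot_lt hlt
  have hSuv := (matchingPolyOn_monic ((S.erase u).erase v)).eval_pos_of_maxRealRoot_lt
    (((maxRealRoot_matchingPolyOn_erase_le (mem_erase.mpr ⟨huv.ne', hv⟩)).trans
      (maxRealRoot_matchingPolyOn_erase_le hu)).trans_lt hlt)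
  rw [IsRoot, matchingPolyOn_deleteEdges huv hu hv, eval_add] at hx
  linarith

end SimpleGraph

open Finset SimpleGraph

section Fintype

variable {V W : Type*} [Fintype V] [Fintype W]

lemma matchingCount_eq_card_matchingsOn (G : SimpleGraph V) (k : ℕ) :
    matchingCount G k = (G.matchingsOn univ k).card := by
  classical
  rw [matchingCount, Nat.card_eq_fintype_card, Fintype.card_subtype]
  congr 1
  ext s
  simp only [mem_filter, mem_univ, true_and, mem_matchingsOn, sym2_univ, subset_univ,
    IsMatchingFinset]
  rfl

lemma matchPoly_eq_matchingPolyOn (G : SimpleGraph V) : matchPoly G = G.matchingPolyOn univ := by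
  simp only [matchPoly, matchingPolyOn, alternatingPoly_apply, card_univ,
    matchingCount_eq_card_matchingsOn]

lemma matchPoly_monic (G : SimpleGraph V) : (matchPoly G).Monic :=
  matchPoly_eq_matchingPolyOn G ▸ matchingPolyOn_monic _

lemma exists_isRoot_matchPoly [Nonempty V] (G : SimpleGraph V) :
    ∃ r, (matchPoly G).IsRoot r := by
  classical
  exact matchPoly_eq_matchingPolyOn G ▸ exists_isRoot_matchingPolyOn univ_nonempty

lemma maxRoot_deleteEdges_le [Nonempty V] (G : SimpleGraph V) (e : Sym2 V) :
    maxRoot (G.deleteEdges {e}) ≤ maxRoot G := by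
  classical
  induction e with
  | h u v =>
    by_cases huv : G.Adj u v
    · simp only [maxRoot, matchPoly_eq_matchingPolyOn]
      exact maxRealRoot_matchingPolyOn_deleteEdges_le huv (mem_univ u) (mem_univ v)
    · rw [deleteEdges_eq_self.mpr (Set.disjoint_singleton_right.mpr huv)]

lemma maxRoot_mono [Nonempty V] {G H : SimpleGraph V} (h : H ≤ G) : maxRoot H ≤ maxRoot G := by
  classical
  suffices ∀ F : Finset (Sym2 V), maxRoot (G.deleteEdges F) ≤ maxRoot G by
    simpa [deleteEdges_sdiff_eq_of_le h] using this (Set.toFinite (G.edgeSet \ H.edgeSet)).toFinset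
  intro F
  induction F using Finset.induction_on with
  | empty => simp
  | insert e F _ ih =>
    rw [coe_insert, Set.insert_eq, Set.union_comm, ← deleteEdges_deleteEdges]
    exact (maxRoot_deleteEdges_le _ e).trans ih

lemma matchingCount_map (f : W ↪ V) (H : SimpleGraph W) (k : ℕ) :
    matchingCount (H.map f) k = matchingCount H k := by
  rw [matchingCount_eq_card_matchingsOn, matchingCount_eq_card_matchingsOn]
  refine (card_bij (fun s _ => s.map f.sym2Map) (fun s hs => ?_)
    (fun s _ t _ => (Finset.map_injective _).eq_iff.mp) fun t ht => ?_).symm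
  · obtain ⟨-, hcard, hs⟩ := mem_matchingsOn.mp hs
    exact mem_matchingsOn.mpr ⟨by simp, by rw [card_map, hcard],
      (isMatchingFinset_map_iff f H s).mpr hs⟩
  · obtain ⟨-, hcard, ht⟩ := mem_matchingsOn.mp ht
    obtain ⟨s, -, rfl⟩ := subset_map_iff.mp fun e he => by
      obtain ⟨e', -, rfl⟩ := (edgeSet_map f H ▸ ht.1 e he :)
      exact mem_map_of_mem _ (mem_univ e')
    exact ⟨s, mem_matchingsOn.mpr ⟨by simp, by rw [← hcard, card_map],
      (isMatchingFinset_map_iff f H s).mp ht⟩, rfl⟩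

lemma matchPoly_map (f : W ↪ V) (H : SimpleGraph W) :
    matchPoly (H.map f) = X ^ (Fintype.card V - Fintype.card W) * matchPoly H := by
  have hsupp : ∀ k, Fintype.card W < 2 * k → (matchingCount H k : ℝ) = 0 := fun k hk => by
    rw [matchingCount_eq_card_matchingsOn, card_matchingsOn_eq_zero (by rwa [card_univ]),
      Nat.cast_zero]
  rw [matchPoly, matchPoly, ← alternatingPoly_apply, ← alternatingPoly_apply,
    X_pow_mul_alternatingPoly hsupp, Nat.add_sub_cancel' (Fintype.card_le_of_embedding f)]
  simp only [matchingCount_map]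

end Fintype

/-- If `H` embeds as a subgraph of `G` (both nonempty), then `t(H) ≤ t(G)`. -/
theorem maxRoot_le_of_subgraph {V W : Type*} [Fintype V] [Fintype W] [Nonempty V] [Nonempty W]
    (G : SimpleGraph V) (H : SimpleGraph W) (f : W ↪ V)
    (hf : ∀ a b, H.Adj a b → G.Adj (f a) (f b)) :
    maxRoot H ≤ maxRoot G := by
  have hle : H.map f ≤ G := (map_le_iff_le_comap f H G).mpr fun a b => hf a b
  refine maxRealRoot_le (exists_isRoot_matchPoly H) fun x hx => ?_
  calc x ≤ maxRoot (H.map f) := le_maxRealRoot (matchPoly_monic _).ne_zero <| by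
        rw [IsRoot, matchPoly_map, eval_mul, hx.eq_zero, mul_zero]
    _ ≤ maxRoot G := maxRoot_mono hle
end

section
/- If G is a connected finite simple graph and H is a proper subgraph of G (obtained by removing at least one vertex or at least one edge), then the maximum matching root of H is strictly less than the maximum matching root of G: t(H) < t(G). -/
open Polynomial

open Finset

namespace MR

variable {V : Type*} [Fintype V] [DecidableEq V]

/-- matching predicate -/
def IsM (s : Finset (Sym2 V)) : Prop := ∀ e ∈ s, ∀ f ∈ s, e ≠ f → ∀ x : V, x ∈ e → x ∉ f

instance : DecidablePred (IsM (V := V)) := fun _ => by unfold IsM; infer_instance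

def mset (E : Finset (Sym2 V)) (k : ℕ) : Finset (Finset (Sym2 V)) :=
  (E.powersetCard k).filter IsM

def mcount (E : Finset (Sym2 V)) (k : ℕ) : ℕ := (mset E k).card

/-- edges disjoint from e -/
def D (e : Sym2 V) (E : Finset (Sym2 V)) : Finset (Sym2 V) :=
  E.filter (fun f => ∀ x ∈ f, x ∉ e)

omit [Fintype V] [DecidableEq V] in
lemma IsM_subset {s t : Finset (Sym2 V)} (h : s ⊆ t) (ht : IsM t) : IsM s :=
  fun e he f hf hne x hx => ht e (h he) f (h hf) hne x hx

lemma mem_mset {E s : Finset (Sym2 V)} {k : ℕ} :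
    s ∈ mset E k ↔ s ⊆ E ∧ s.card = k ∧ IsM s := by
  simp [mset, Finset.mem_powersetCard, and_assoc]

lemma mcount_zero (E : Finset (Sym2 V)) : mcount E 0 = 1 := by
  have : mset E 0 = {∅} := by
    ext s
    simp only [mem_mset, Finset.card_eq_zero, Finset.mem_singleton]
    constructor
    · rintro ⟨-, rfl, -⟩; rfl
    · rintro rfl; exact ⟨Finset.empty_subset _, rfl, fun e he => absurd he (by simp)⟩
  simp [mcount, this]

lemma mcount_eq_zero_of_card {E : Finset (Sym2 V)} {k : ℕ} (h : E.card < k) :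
    mcount E k = 0 := by
  rw [mcount, Finset.card_eq_zero, mset, Finset.filter_eq_empty_iff]
  intro s hs
  rw [Finset.mem_powersetCard] at hs
  intro _
  exact absurd (Finset.card_le_card hs.1) (by omega)

lemma D_subset (e : Sym2 V) (E : Finset (Sym2 V)) : D e E ⊆ E := Finset.filter_subset _ _

lemma not_mem_D (e : Sym2 V) (E : Finset (Sym2 V)) : e ∉ D e E := by
  intro h
  rw [D, Finset.mem_filter] at h
  obtain ⟨a, b⟩ := e
  exact h.2 a (by simp) (by simp)

lemma mem_D {e f : Sym2 V} {E : Finset (Sym2 V)} :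
    f ∈ D e E ↔ f ∈ E ∧ ∀ x ∈ f, x ∉ e := by simp [D]

/-- key bijection: matchings containing e ↔ matchings of D e E of one smaller size -/
lemma card_filter_mem (e : Sym2 V) (E : Finset (Sym2 V)) (he : e ∈ E) (k : ℕ) :
    ((mset E (k+1)).filter (fun s => e ∈ s)).card = mcount (D e E) k := by
  rw [mcount]
  refine Finset.card_bij' (fun s _ => s.erase e) (fun t _ => insert e t) ?hi ?hj ?li ?ri
  case hi =>
    intro s hs
    rw [Finset.mem_filter] at hs
    obtain ⟨hs, hes⟩ := hs
    rw [mem_mset] at hs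
    obtain ⟨hsub, hcard, hM⟩ := hs
    rw [mem_mset]
    refine ⟨?_, ?_, IsM_subset (Finset.erase_subset _ _) hM⟩
    · intro f hf
      rw [Finset.mem_erase] at hf
      rw [mem_D]
      exact ⟨hsub hf.2, fun x hx => hM f hf.2 e hes hf.1 x hx⟩
    · rw [Finset.card_erase_of_mem hes, hcard]; omega
  case hj =>
    intro t ht
    rw [mem_mset] at ht
    obtain ⟨hsub, hcard, hM⟩ := ht
    have het : e ∉ t := fun h => not_mem_D e E (hsub h)
    rw [Finset.mem_filter, mem_mset]
    refine ⟨⟨?_, ?_, ?_⟩, Finset.mem_insert_self _ _⟩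
    · intro f hf
      rcases Finset.mem_insert.mp hf with rfl | hf
      · exact he
      · exact D_subset e E (hsub hf)
    · rw [Finset.card_insert_of_notMem het, hcard]
    · intro a ha b hb hab x hxa hxb
      by_cases hae : a = e
      · subst hae
        rcases Finset.mem_insert.mp hb with rfl | hb
        · exact hab rfl
        · exact (mem_D.mp (hsub hb)).2 x hxb hxa
      · have ha' : a ∈ t := (Finset.mem_insert.mp ha).resolve_left hae
        by_cases hbe : b = e
        · subst hbe
          exact (mem_D.mp (hsub ha')).2 x hxa hxb
        · have hb' : b ∈ t := (Finset.mem_insert.mp hb).resolve_left hbe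
          exact hM a ha' b hb' hab x hxa hxb
  case li =>
    intro s hs
    rw [Finset.mem_filter] at hs
    exact Finset.insert_erase hs.2
  case ri =>
    intro t ht
    rw [mem_mset] at ht
    exact Finset.erase_insert (fun h => not_mem_D e E (ht.1 h))

/-- edge recurrence -/
lemma mcount_edge_rec {e : Sym2 V} {E : Finset (Sym2 V)} (he : e ∈ E) (k : ℕ) :
    mcount E (k+1) = mcount (E.erase e) (k+1) + mcount (D e E) k := by
  have hsplit := Finset.card_filter_add_card_filter_not
    (s := mset E (k+1)) (p := fun s => e ∈ s)
  have h1 : ((mset E (k+1)).filter (fun s => e ∉ s)) = mset (E.erase e) (k+1) := by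
    ext s
    simp only [Finset.mem_filter, mem_mset]
    constructor
    · rintro ⟨⟨hsub, hcard, hM⟩, hes⟩
      exact ⟨fun f hf => Finset.mem_erase.mpr ⟨fun h => hes (h ▸ hf), hsub hf⟩, hcard, hM⟩
    · rintro ⟨hsub, hcard, hM⟩
      exact ⟨⟨fun f hf => (Finset.mem_erase.mp (hsub hf)).2, hcard, hM⟩,
        fun h => (Finset.mem_erase.mp (hsub h)).1 rfl⟩
  rw [mcount, ← hsplit, card_filter_mem e E he k, h1]
  simp only [mcount]
  ring

/-- vertex recurrence -/
lemma mcount_vertex_rec (u : V) (E : Finset (Sym2 V)) (k : ℕ) :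
    mcount E (k+1) = mcount (E.filter (fun e => u ∉ e)) (k+1)
      + ∑ e ∈ E.filter (fun e => u ∈ e), mcount (D e E) k := by
  have hsplit := Finset.card_filter_add_card_filter_not
    (s := mset E (k+1)) (p := fun s => ∃ e ∈ s, u ∈ e)
  have h1 : ((mset E (k+1)).filter (fun s => ¬ ∃ e ∈ s, u ∈ e))
      = mset (E.filter (fun e => u ∉ e)) (k+1) := by
    ext s
    simp only [Finset.mem_filter, mem_mset, not_exists, not_and]
    constructor
    · rintro ⟨⟨hsub, hcard, hM⟩, hu⟩
      exact ⟨fun f hf => Finset.mem_filter.mpr ⟨hsub hf, fun h => hu f hf h⟩, hcard, hM⟩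
    · rintro ⟨hsub, hcard, hM⟩
      exact ⟨⟨fun f hf => (Finset.mem_filter.mp (hsub hf)).1, hcard, hM⟩,
        fun f hf => (Finset.mem_filter.mp (hsub hf)).2⟩
  have h2 : ((mset E (k+1)).filter (fun s => ∃ e ∈ s, u ∈ e))
      = (E.filter (fun e => u ∈ e)).biUnion
          (fun e => (mset E (k+1)).filter (fun s => e ∈ s)) := by
    ext s
    simp only [Finset.mem_filter, Finset.mem_biUnion]
    constructor
    · rintro ⟨hs, e, hes, hue⟩
      exact ⟨e, ⟨(mem_mset.mp hs).1 hes, hue⟩, hs, hes⟩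
    · rintro ⟨e, ⟨-, hue⟩, hs, hes⟩
      exact ⟨hs, e, hes, hue⟩
  have hdisj : ∀ e₁ ∈ E.filter (fun e => u ∈ e), ∀ e₂ ∈ E.filter (fun e => u ∈ e), e₁ ≠ e₂ →
      Disjoint ((mset E (k+1)).filter (fun s => e₁ ∈ s))
        ((mset E (k+1)).filter (fun s => e₂ ∈ s)) := by
    intro e₁ h₁ e₂ h₂ hne
    rw [Finset.disjoint_left]
    intro s hs₁ hs₂
    rw [Finset.mem_filter] at hs₁ hs₂
    have hM := (mem_mset.mp hs₁.1).2.2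
    exact hM e₁ hs₁.2 e₂ hs₂.2 hne u (Finset.mem_filter.mp h₁).2 (Finset.mem_filter.mp h₂).2
  rw [mcount, ← hsplit, h1, h2, Finset.card_biUnion hdisj]
  rw [Finset.sum_congr rfl (fun e hh => card_filter_mem e E (Finset.mem_filter.mp hh).1 k)]
  simp only [mcount]
  ring

/-- auxiliary generating polynomial in `y`: `∑ (-1)^k m_k y^k` -/
noncomputable def hp (E : Finset (Sym2 V)) : ℝ[X] :=
  ∑ k ∈ Finset.range (E.card + 1), C ((-1 : ℝ) ^ k * (mcount E k : ℝ)) * X ^ k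

lemma hp_coeff (E : Finset (Sym2 V)) (k : ℕ) :
    (hp E).coeff k = (-1 : ℝ) ^ k * (mcount E k : ℝ) := by
  rw [hp, Polynomial.finset_sum_coeff]
  simp only [Polynomial.coeff_C_mul, Polynomial.coeff_X_pow]
  by_cases hk : k ≤ E.card
  · rw [Finset.sum_eq_single k]
    · simp
    · intro b _ hbk; simp [Ne.symm hbk]
    · intro h; exact absurd (Finset.mem_range.mpr (by omega)) h
  · rw [Finset.sum_eq_zero]
    · rw [mcount_eq_zero_of_card (by omega)]; simp
    · intro b hb
      rw [Finset.mem_range] at hb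
      have hbk : ¬ (k = b) := by omega
      rw [if_neg hbk, mul_zero]

/-- hp edge recurrence -/
lemma hp_edge_rec {e : Sym2 V} {E : Finset (Sym2 V)} (he : e ∈ E) :
    hp E = hp (E.erase e) - X * hp (D e E) := by
  apply Polynomial.ext
  intro k
  rw [Polynomial.coeff_sub, hp_coeff]
  cases k with
  | zero =>
    rw [Polynomial.mul_coeff_zero, hp_coeff, mcount_zero, mcount_zero]
    simp
  | succ n =>
    rw [Polynomial.coeff_X_mul, hp_coeff, hp_coeff, mcount_edge_rec he n]
    push_cast
    ring

/-- hp vertex recurrence -/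
lemma hp_vertex_rec (u : V) (E : Finset (Sym2 V)) :
    hp E = hp (E.filter (fun e => u ∉ e))
      - X * ∑ e ∈ E.filter (fun e => u ∈ e), hp (D e E) := by
  apply Polynomial.ext
  intro k
  rw [Polynomial.coeff_sub, hp_coeff]
  cases k with
  | zero =>
    rw [Polynomial.mul_coeff_zero, hp_coeff, mcount_zero, mcount_zero]
    simp
  | succ n =>
    rw [Polynomial.coeff_X_mul, hp_coeff, Polynomial.finset_sum_coeff,
      Finset.sum_congr rfl (fun e _ => hp_coeff (D e E) n), ← Finset.mul_sum,
      mcount_vertex_rec u E n]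
    push_cast
    ring

/-- the two-element finset of endpoints of an edge -/
def sF : Sym2 V → Finset V :=
  Sym2.lift ⟨fun a b => {a, b}, fun a b => by simp only []; rw [Finset.pair_comm]⟩

lemma mem_sF {x : V} {e : Sym2 V} : x ∈ sF e ↔ x ∈ e := by
  induction e with
  | _ a b => simp [sF, Sym2.mem_iff]

lemma card_sF {e : Sym2 V} (h : ¬ e.IsDiag) : (sF e).card = 2 := by
  induction e with
  | _ a b =>
    rw [Sym2.mk_isDiag_iff] at h
    exact Finset.card_pair h

noncomputable def q (S : Finset V) (E : Finset (Sym2 V)) : ℝ[X] :=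
  ∑ k ∈ Finset.range (S.card + 1),
    C ((-1 : ℝ) ^ k * (mcount E k : ℝ)) * X ^ (S.card - 2 * k)

variable (G : SimpleGraph V) [DecidableRel G.Adj]

/-- `(S, E)` describes a subgraph of `G` -/
def Valid (S : Finset V) (E : Finset (Sym2 V)) : Prop :=
  E ⊆ G.edgeFinset ∧ ∀ e ∈ E, ∀ x ∈ e, x ∈ S

lemma not_isDiag_of_valid {S : Finset V} {E : Finset (Sym2 V)} (h : Valid G S E)
    {e : Sym2 V} (he : e ∈ E) : ¬ e.IsDiag :=
  G.not_isDiag_of_mem_edgeSet (SimpleGraph.mem_edgeFinset.mp (h.1 he))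

lemma sF_subset_of_valid {S : Finset V} {E : Finset (Sym2 V)} (h : Valid G S E)
    {e : Sym2 V} (he : e ∈ E) : sF e ⊆ S :=
  fun x hx => h.2 e he x (mem_sF.mp hx)

/-- size bound: a k-matching needs 2k vertices -/
lemma mcount_eq_zero_of_gt {S : Finset V} {E : Finset (Sym2 V)} (h : Valid G S E)
    {k : ℕ} (hk : S.card < 2 * k) : mcount E k = 0 := by
  by_contra hne
  have hNE : (mset E k).Nonempty := by
    rw [Finset.nonempty_iff_ne_empty]
    intro hemp
    exact hne (by rw [mcount, hemp, Finset.card_empty])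
  obtain ⟨s, hs⟩ := hNE
  rw [mem_mset] at hs
  obtain ⟨hsub, hcard, hM⟩ := hs
  have hdisj : ∀ e₁ ∈ s, ∀ e₂ ∈ s, e₁ ≠ e₂ → Disjoint (sF e₁) (sF e₂) := by
    intro e₁ h₁ e₂ h₂ hne
    rw [Finset.disjoint_left]
    intro x hx₁ hx₂
    exact hM e₁ h₁ e₂ h₂ hne x (mem_sF.mp hx₁) (mem_sF.mp hx₂)
  have hT : (s.biUnion sF).card = 2 * k := by
    rw [Finset.card_biUnion hdisj]
    rw [Finset.sum_congr rfl (fun e hees => card_sF (not_isDiag_of_valid G h (hsub hees)))]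
    rw [Finset.sum_const, hcard, smul_eq_mul]
    omega
  have hTS : s.biUnion sF ⊆ S := by
    intro x hx
    rw [Finset.mem_biUnion] at hx
    obtain ⟨e, hes, hxe⟩ := hx
    exact h.2 e (hsub hes) x (mem_sF.mp hxe)
  have := Finset.card_le_card hTS
  omega

lemma q_coeff_card (S : Finset V) (E : Finset (Sym2 V)) :
    (q S E).coeff S.card = 1 := by
  rw [q, Polynomial.finset_sum_coeff]
  simp only [Polynomial.coeff_C_mul, Polynomial.coeff_X_pow]
  rw [Finset.sum_eq_single 0]
  · simp [mcount_zero]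
  · intro k hk hk0
    rw [Finset.mem_range] at hk
    have : ¬ (S.card = S.card - 2 * k) := by omega
    rw [if_neg this, mul_zero]
  · intro h; exact absurd (Finset.mem_range.mpr (by omega)) h

lemma q_coeff_eq_zero {S : Finset V} {E : Finset (Sym2 V)} {m : ℕ} (hm : S.card < m) :
    (q S E).coeff m = 0 := by
  rw [q, Polynomial.finset_sum_coeff]
  apply Finset.sum_eq_zero
  intro k hk
  simp only [Polynomial.coeff_C_mul, Polynomial.coeff_X_pow]
  have : ¬ (m = S.card - 2 * k) := by omega
  rw [if_neg this, mul_zero]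

lemma q_natDegree (S : Finset V) (E : Finset (Sym2 V)) : (q S E).natDegree = S.card := by
  apply le_antisymm
  · exact Polynomial.natDegree_le_iff_coeff_eq_zero.mpr (fun m hm => q_coeff_eq_zero hm)
  · exact Polynomial.le_natDegree_of_ne_zero (by rw [q_coeff_card]; norm_num)

lemma q_monic (S : Finset V) (E : Finset (Sym2 V)) : (q S E).Monic := by
  rw [Polynomial.Monic, Polynomial.leadingCoeff, q_natDegree, q_coeff_card]

lemma q_eval {S : Finset V} {E : Finset (Sym2 V)} (h : Valid G S E) {x : ℝ} (hx : 0 < x) :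
    (q S E).eval x = x ^ S.card * (hp E).eval ((x * x)⁻¹) := by
  have hxx : (0:ℝ) < x * x := mul_pos hx hx
  rw [q, hp, Polynomial.eval_finset_sum, Polynomial.eval_finset_sum]
  simp only [Polynomial.eval_mul, Polynomial.eval_C, Polynomial.eval_pow, Polynomial.eval_X]
  rw [Finset.mul_sum]
  set N := S.card + E.card + 2 with hN
  rw [Finset.sum_subset (s₁ := Finset.range (S.card + 1)) (s₂ := Finset.range N)
      (Finset.range_subset_range.mpr (by omega)) (fun k _ hk => ?_),
    Finset.sum_subset (s₁ := Finset.range (E.card + 1)) (s₂ := Finset.range N)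
      (Finset.range_subset_range.mpr (by omega)) (fun k _ hk => ?_)]
  rotate_left
  · rw [Finset.mem_range, not_lt] at hk
    rw [mcount_eq_zero_of_card (by omega)]
    simp
  · rw [Finset.mem_range, not_lt] at hk
    rw [mcount_eq_zero_of_gt G h (by omega)]
    simp
  apply Finset.sum_congr rfl
  intro k _
  by_cases hmc : mcount E k = 0
  · rw [hmc]; simp
  · have h2k : 2 * k ≤ S.card := by
      by_contra hc
      exact hmc (mcount_eq_zero_of_gt G h (by omega))
    have hpow : x ^ S.card = x ^ (S.card - 2 * k) * (x * x) ^ k := by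
      rw [← pow_two, ← pow_mul, ← pow_add]
      congr 1
      omega
    rw [hpow, inv_pow]
    field_simp

lemma valid_erase {S : Finset V} {E : Finset (Sym2 V)} (h : Valid G S E) (e : Sym2 V) :
    Valid G S (E.erase e) :=
  ⟨fun f hf => h.1 (Finset.erase_subset _ _ hf),
   fun f hf => h.2 f (Finset.erase_subset _ _ hf)⟩

lemma valid_D {S : Finset V} {E : Finset (Sym2 V)} (h : Valid G S E) {e : Sym2 V} :
    Valid G (S \ sF e) (D e E) := by
  constructor
  · exact fun f hf => h.1 (D_subset e E hf)
  · intro f hf x hxf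
    rw [mem_D] at hf
    rw [Finset.mem_sdiff]
    exact ⟨h.2 f hf.1 x hxf, fun hc => hf.2 x hxf (mem_sF.mp hc)⟩

lemma valid_filter {S : Finset V} {E : Finset (Sym2 V)} (h : Valid G S E) (u : V) :
    Valid G (S.erase u) (E.filter (fun e => u ∉ e)) := by
  constructor
  · exact fun f hf => h.1 (Finset.filter_subset _ _ hf)
  · intro f hf x hxf
    rw [Finset.mem_filter] at hf
    exact Finset.mem_erase.mpr ⟨fun hc => hf.2 (hc ▸ hxf), h.2 f hf.1 x hxf⟩

lemma card_sdiff_sF {S : Finset V} {E : Finset (Sym2 V)} (h : Valid G S E) {e : Sym2 V}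
    (he : e ∈ E) : (S \ sF e).card = S.card - 2 ∧ 2 ≤ S.card := by
  have hsub := sF_subset_of_valid G h he
  have hc2 := card_sF (not_isDiag_of_valid G h he)
  constructor
  · rw [Finset.card_sdiff_of_subset hsub, hc2]
  · calc 2 = (sF e).card := hc2.symm
      _ ≤ S.card := Finset.card_le_card hsub

/-- eval-level edge recurrence -/
lemma qe_edge {S : Finset V} {E : Finset (Sym2 V)} (h : Valid G S E) {e : Sym2 V}
    (he : e ∈ E) {x : ℝ} (hx : 0 < x) :
    (q S E).eval x = (q S (E.erase e)).eval x - (q (S \ sF e) (D e E)).eval x := by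
  obtain ⟨hcard, hS2⟩ := card_sdiff_sF G h he
  have hxx : (x * x) ≠ 0 := by positivity
  rw [q_eval G h hx, q_eval G (valid_erase G h e) hx, q_eval G (valid_D G h) hx,
    hp_edge_rec he, hcard]
  simp only [Polynomial.eval_sub, Polynomial.eval_mul, Polynomial.eval_X]
  have hpow : x ^ S.card = x ^ (S.card - 2) * (x * x) := by
    rw [← pow_two, ← pow_add]
    congr 1
    omega
  rw [mul_sub, hpow]
  field_simp

/-- eval-level vertex recurrence -/
lemma qe_vertex {S : Finset V} {E : Finset (Sym2 V)} (h : Valid G S E) {u : V}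
    (hu : u ∈ S) {x : ℝ} (hx : 0 < x) :
    (q S E).eval x = x * (q (S.erase u) (E.filter (fun e => u ∉ e))).eval x
      - ∑ e ∈ E.filter (fun e => u ∈ e), (q (S \ sF e) (D e E)).eval x := by
  have hxx : (x * x) ≠ 0 := by positivity
  have hS1 : 1 ≤ S.card := Finset.card_pos.mpr ⟨u, hu⟩
  rw [q_eval G h hx, q_eval G (valid_filter G h u) hx, hp_vertex_rec u E,
    Finset.card_erase_of_mem hu]
  simp only [Polynomial.eval_sub, Polynomial.eval_mul, Polynomial.eval_X,
    Polynomial.eval_finset_sum]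
  rw [Finset.sum_congr rfl (fun e hee => q_eval G (valid_D G h)
    (hx) (E := D e E) (S := S \ sF e))]
  have hsum : x ^ S.card * ((x*x)⁻¹ * ∑ e ∈ E.filter (fun e => u ∈ e),
        (hp (D e E)).eval ((x*x)⁻¹))
      = ∑ e ∈ E.filter (fun e => u ∈ e),
        x ^ ((S \ sF e).card) * (hp (D e E)).eval ((x*x)⁻¹) := by
    rw [Finset.mul_sum, Finset.mul_sum]
    apply Finset.sum_congr rfl
    intro e hee
    have he : e ∈ E := (Finset.mem_filter.mp hee).1
    obtain ⟨hc, h2⟩ := card_sdiff_sF G h he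
    rw [hc]
    have hpow : x ^ S.card = x ^ (S.card - 2) * (x * x) := by
      rw [← pow_two, ← pow_add]
      congr 1
      omega
    rw [hpow]
    field_simp
  rw [mul_sub, hsum]
  have hx1 : x ^ S.card = x * x ^ (S.card - 1) := by
    rw [← pow_succ']
    congr 1
    omega
  rw [hx1]
  ring

lemma matchingCount_eq (k : ℕ) : matchingCount G k = mcount G.edgeFinset k := by
  classical
  rw [matchingCount, Nat.card_eq_fintype_card, Fintype.card_subtype, mcount]
  congr 1
  ext s
  simp only [Finset.mem_filter, Finset.mem_univ, true_and, mem_mset,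
    SimpleGraph.mem_edgeFinset]
  constructor
  · rintro ⟨h1, h2, h3⟩
    exact ⟨fun e hes => SimpleGraph.mem_edgeFinset.mpr (h2 e hes), h1, h3⟩
  · rintro ⟨h1, h2, h3⟩
    exact ⟨h2, fun e hes => SimpleGraph.mem_edgeFinset.mp (h1 hes), h3⟩

lemma matchPoly_eq : matchPoly G = q (Finset.univ : Finset V) G.edgeFinset := by
  rw [matchPoly, q, Finset.card_univ]
  apply Finset.sum_congr rfl
  intro k _
  rw [matchingCount_eq]

end MR

section Transfer

open MR

variable {W V : Type*} [Fintype W] [DecidableEq W] [Fintype V] [DecidableEq V]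
variable (H : SimpleGraph W) [DecidableRel H.Adj] (f : W ↪ V)

lemma mcount_image (k : ℕ) :
    mcount (H.edgeFinset.image (Sym2.map f)) k = mcount H.edgeFinset k := by
  rw [mcount, mcount]
  apply Finset.card_bij (fun (t : Finset (Sym2 V)) _ =>
    H.edgeFinset.filter (fun e => Sym2.map f e ∈ t))
  · -- maps into
    intro t ht
    rw [mem_mset] at ht ⊢
    obtain ⟨hsub, hcard, hM⟩ := ht
    have hinj : Function.Injective (Sym2.map f) := Sym2.map.injective f.injective
    have himg : (H.edgeFinset.filter (fun e => Sym2.map f e ∈ t)).image (Sym2.map f) = t := by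
      ext e'
      rw [Finset.mem_image]
      constructor
      · rintro ⟨e, he, rfl⟩
        exact (Finset.mem_filter.mp he).2
      · intro he'
        obtain ⟨e, heH, rfl⟩ := Finset.mem_image.mp (hsub he')
        exact ⟨e, Finset.mem_filter.mpr ⟨heH, he'⟩, rfl⟩
    refine ⟨Finset.filter_subset _ _, ?_, ?_⟩
    · have hcc := congrArg Finset.card himg
      rw [Finset.card_image_of_injective _ hinj] at hcc
      exact hcc.trans hcard
    · intro a ha b hb hab x hxa hxb
      have haf : Sym2.map f a ∈ t := (Finset.mem_filter.mp ha).2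
      have hbf : Sym2.map f b ∈ t := (Finset.mem_filter.mp hb).2
      have habf : Sym2.map f a ≠ Sym2.map f b := fun hc => hab (hinj hc)
      exact hM _ haf _ hbf habf (f x) (Sym2.mem_map.mpr ⟨x, hxa, rfl⟩)
        (Sym2.mem_map.mpr ⟨x, hxb, rfl⟩)
  · -- injective
    intro t₁ h₁ t₂ h₂ heq
    rw [mem_mset] at h₁ h₂
    ext e'
    constructor
    · intro he'
      obtain ⟨e, heH, rfl⟩ := Finset.mem_image.mp (h₁.1 he')
      have : e ∈ H.edgeFinset.filter (fun e => Sym2.map f e ∈ t₁) :=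
        Finset.mem_filter.mpr ⟨heH, he'⟩
      rw [heq] at this
      exact (Finset.mem_filter.mp this).2
    · intro he'
      obtain ⟨e, heH, rfl⟩ := Finset.mem_image.mp (h₂.1 he')
      have : e ∈ H.edgeFinset.filter (fun e => Sym2.map f e ∈ t₂) :=
        Finset.mem_filter.mpr ⟨heH, he'⟩
      rw [← heq] at this
      exact (Finset.mem_filter.mp this).2
  · -- surjective
    intro s hs
    rw [mem_mset] at hs
    obtain ⟨hsub, hcard, hM⟩ := hs
    have hinj : Function.Injective (Sym2.map f) := Sym2.map.injective f.injective
    refine ⟨s.image (Sym2.map f), ?_, ?_⟩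
    · rw [mem_mset]
      refine ⟨?_, ?_, ?_⟩
      · intro e' he'
        obtain ⟨e, hes, rfl⟩ := Finset.mem_image.mp he'
        exact Finset.mem_image_of_mem _ (hsub hes)
      · rw [Finset.card_image_of_injective _ hinj, hcard]
      · intro a ha b hb hab x hxa hxb
        obtain ⟨ea, heas, rfl⟩ := Finset.mem_image.mp ha
        obtain ⟨eb, hebs, rfl⟩ := Finset.mem_image.mp hb
        obtain ⟨ya, hya, rfl⟩ := Sym2.mem_map.mp hxa
        obtain ⟨yb, hyb, hxy⟩ := Sym2.mem_map.mp hxb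
        have : ya = yb := f.injective hxy.symm
        subst this
        exact hM ea heas eb hebs (fun hc => hab (hc ▸ rfl)) ya hya hyb
    · ext e
      rw [Finset.mem_filter]
      constructor
      · rintro ⟨heH, hmem⟩
        obtain ⟨e₂, he₂, he₂e⟩ := Finset.mem_image.mp hmem
        exact (hinj he₂e) ▸ he₂
      · intro hes
        exact ⟨hsub hes, Finset.mem_image_of_mem _ hes⟩

lemma matchPoly_image :
    matchPoly H = q (Finset.univ.map f) (H.edgeFinset.image (Sym2.map f)) := by
  rw [matchPoly, q, Finset.card_map, Finset.card_univ]
  apply Finset.sum_congr rfl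
  intro k _
  rw [matchingCount_eq, mcount_image]

end Transfer

/-- positivity of a monic real polynomial beyond its largest root -/
lemma monic_pos_of_no_roots {p : ℝ[X]} (hm : p.Monic) {t : ℝ}
    (hroots : ∀ y, t < y → p.eval y ≠ 0) :
    (∀ y, t < y → 0 < p.eval y) ∧ 0 ≤ p.eval t := by
  have hcont : Continuous fun x : ℝ => p.eval x := p.continuous
  have hpos : ∀ y, t < y → 0 < p.eval y := by
    intro y hy
    rcases lt_or_ge 0 (p.eval y) with h | h
    · exact h
    · exfalso
      have hlt : p.eval y < 0 := lt_of_le_of_ne h (hroots y hy)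
      by_cases hdeg : p.natDegree = 0
      · have : p = 1 := hm.natDegree_eq_zero.mp hdeg
        rw [this] at hlt
        norm_num at hlt
      · have hdeg' : 0 < p.degree :=
          Polynomial.natDegree_pos_iff_degree_pos.mp (by omega)
        have htends := p.tendsto_atTop_of_leadingCoeff_nonneg hdeg'
          (by rw [hm.leadingCoeff]; norm_num)
        obtain ⟨M, hM1, hM2⟩ :=
          ((htends.eventually_ge_atTop 1).and (Filter.eventually_ge_atTop y)).exists
        have h0mem : (0:ℝ) ∈ Set.Icc (p.eval y) (p.eval M) := ⟨le_of_lt hlt, by linarith⟩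
        obtain ⟨c, hc, hc0⟩ := intermediate_value_Icc hM2 hcont.continuousOn h0mem
        exact hroots c (lt_of_lt_of_le hy hc.1) hc0
  refine ⟨hpos, ?_⟩
  by_contra hneg
  push_neg at hneg
  have hopen : IsOpen {x : ℝ | p.eval x < 0} := isOpen_lt hcont continuous_const
  obtain ⟨ε, hε, hball⟩ := Metric.isOpen_iff.mp hopen t hneg
  have hmem : t + ε / 2 ∈ Metric.ball t ε := by
    rw [Metric.mem_ball, Real.dist_eq, show t + ε / 2 - t = ε / 2 by ring,
      abs_of_pos (by linarith)]
    linarith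
  have := hball hmem
  have := hpos (t + ε / 2) (by linarith)
  simp only [Set.mem_setOf_eq] at *
  linarith

namespace MR

variable {V : Type*} [Fintype V] [DecidableEq V] (G : SimpleGraph V) [DecidableRel G.Adj]

def Rset : Set ℝ := {x : ℝ | ∃ S E, Valid G S E ∧ (q S E).eval x = 0}

lemma Rset_finite : (Rset G).Finite := by
  have hsub : Rset G ⊆ ⋃ p : Finset V × Finset (Sym2 V), {x : ℝ | (q p.1 p.2).eval x = 0} := by
    rintro x ⟨S, E, -, hx⟩
    exact Set.mem_iUnion.mpr ⟨(S, E), hx⟩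
  refine Set.Finite.subset (Set.finite_iUnion (fun p => ?_)) hsub
  exact Polynomial.finite_setOf_isRoot (q_monic p.1 p.2).ne_zero

noncomputable def theta : ℝ := sSup (Rset G)

lemma le_theta {x : ℝ} (hx : x ∈ Rset G) : x ≤ theta G :=
  le_csSup (Rset_finite G).bddAbove hx

lemma q_eval_theta_nonneg {S : Finset V} {E : Finset (Sym2 V)} (h : Valid G S E)
    {x : ℝ} (hx : theta G ≤ x) : 0 ≤ (q S E).eval x := by
  have hroots : ∀ y, theta G < y → (q S E).eval y ≠ 0 := by
    intro y hy hc
    exact absurd (le_theta G ⟨S, E, h, hc⟩) (not_le.mpr hy)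
  obtain ⟨hpos, hnn⟩ := monic_pos_of_no_roots (q_monic S E) hroots
  rcases eq_or_lt_of_le hx with rfl | hlt
  · exact hnn
  · exact le_of_lt (hpos x hlt)

lemma q_eval_theta_pos {S : Finset V} {E : Finset (Sym2 V)} (h : Valid G S E)
    {x : ℝ} (hx : theta G ≤ x) (hne : (q S E).eval x ≠ 0) : 0 < (q S E).eval x :=
  lt_of_le_of_ne (q_eval_theta_nonneg G h hx) (Ne.symm hne)

/-- Main structural lemma: the only subgraph whose matching polynomial vanishes at θ
is `G` itself. -/
lemma achiever_eq (hconn : G.Connected) (hθ : 0 < theta G) :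
    ∀ n (S : Finset V) (E : Finset (Sym2 V)), S.card ≤ n → Valid G S E →
      (q S E).eval (theta G) = 0 → S = Finset.univ ∧ E = G.edgeFinset := by
  intro n
  induction n with
  | zero =>
    intro S E hcard hval hroot
    exfalso
    have hS : S = ∅ := Finset.card_eq_zero.mp (by omega)
    have hE : E = ∅ := by
      rw [Finset.eq_empty_iff_forall_notMem]
      intro e he
      obtain ⟨a, b⟩ := e
      have := hval.2 _ he a (by simp)
      rw [hS] at this
      simp at this
    rw [hS, hE, q] at hroot
    simp [mcount_zero] at hroot
  | succ n IH =>
    intro S E hcard hval hroot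
    by_cases hSn : S.card ≤ n
    · exact IH S E hSn hval hroot
    have hpos : ∀ S' E', S'.card < S.card → Valid G S' E' →
        0 < (q S' E').eval (theta G) := by
      intro S' E' hlt hv
      refine q_eval_theta_pos G hv le_rfl ?_
      intro hr
      obtain ⟨rfl, -⟩ := IH S' E' (by omega) hv hr
      have := Finset.card_le_card (Finset.subset_univ S)
      omega
    by_cases hmiss : ∃ e ∈ G.edgeFinset, (∀ x ∈ e, x ∈ S) ∧ e ∉ E
    · exfalso
      obtain ⟨e, heG, heS, heE⟩ := hmiss
      have hvalE' : Valid G S (insert e E) := by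
        constructor
        · intro f hf
          rcases Finset.mem_insert.mp hf with rfl | hf
          · exact heG
          · exact hval.1 hf
        · intro f hf
          rcases Finset.mem_insert.mp hf with rfl | hf
          · exact heS
          · exact hval.2 f hf
      have hDeq : D e (insert e E) = D e E := by
        rw [D, D, Finset.filter_insert, if_neg]
        obtain ⟨a, b⟩ := e
        intro hcc
        exact hcc a (by simp) (by simp)
      have hrec := qe_edge G hvalE' (Finset.mem_insert_self e E) hθ
      rw [Finset.erase_insert heE, hDeq, hroot] at hrec
      have h1 : 0 ≤ (q S (insert e E)).eval (theta G) := q_eval_theta_nonneg G hvalE' le_rfl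
      obtain ⟨hcd, h2S⟩ := card_sdiff_sF G hvalE' (Finset.mem_insert_self e E)
      have h2 : 0 < (q (S \ sF e) (D e E)).eval (theta G) :=
        hpos _ _ (by omega) (valid_D G hval)
      linarith
    have hE : E = G.edgeFinset.filter (fun e => ∀ x ∈ e, x ∈ S) := by
      ext f
      rw [Finset.mem_filter]
      constructor
      · intro hf
        exact ⟨hval.1 hf, hval.2 f hf⟩
      · rintro ⟨hf1, hf2⟩
        by_contra hfE
        exact hmiss ⟨f, hf1, hf2, hfE⟩
    by_cases hSuniv : S = Finset.univ
    · subst hSuniv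
      refine ⟨rfl, ?_⟩
      rw [hE]
      apply Finset.filter_true_of_mem
      intro e _
      simp
    · exfalso
      obtain ⟨w, hw⟩ : ∃ w, w ∉ S := by
        by_contra hc
        push_neg at hc
        exact hSuniv (Finset.eq_univ_iff_forall.mpr hc)
      have hSne : S.Nonempty := Finset.card_pos.mp (by omega)
      obtain ⟨v₀, hv₀⟩ := hSne
      obtain ⟨p⟩ := hconn.preconnected v₀ w
      obtain ⟨d, -, hdS, hdnS⟩ := p.exists_boundary_dart (↑S : Set V)
        (by simpa using hv₀) (by simpa using hw)
      set u := d.fst with hu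
      set w' := d.snd with hw'
      have hadj : G.Adj u w' := d.adj
      have huS : u ∈ S := by simpa using hdS
      have hw'S : w' ∉ S := by simpa using hdnS
      set S' := insert w' S with hS'
      set EK := G.edgeFinset.filter (fun e => ∀ x ∈ e, x ∈ S') with hEK
      have hvalK : Valid G S' EK :=
        ⟨Finset.filter_subset _ _, fun e he => (Finset.mem_filter.mp he).2⟩
      have hrec := qe_vertex G hvalK (Finset.mem_insert_self w' S) hθ
      have herase : S'.erase w' = S := Finset.erase_insert hw'S
      have hfilter : EK.filter (fun e => w' ∉ e) = E := by
        rw [hE]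
        ext f
        simp only [Finset.mem_filter, hEK]
        constructor
        · rintro ⟨⟨hf1, hf2⟩, hf3⟩
          refine ⟨hf1, fun x hx => ?_⟩
          rcases Finset.mem_insert.mp (hf2 x hx) with rfl | hh
          · exact absurd hx hf3
          · exact hh
        · rintro ⟨hf1, hf2⟩
          exact ⟨⟨hf1, fun x hx => Finset.mem_insert_of_mem (hf2 x hx)⟩,
            fun hc => hw'S (hf2 w' hc)⟩
      rw [herase, hfilter, hroot, mul_zero] at hrec
      have hK0 : 0 ≤ (q S' EK).eval (theta G) := q_eval_theta_nonneg G hvalK le_rfl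
      have hcS' : S'.card = S.card + 1 := Finset.card_insert_of_notMem hw'S
      have hsumpos : 0 < ∑ e ∈ EK.filter (fun e => w' ∈ e),
          (q (S' \ sF e) (D e EK)).eval (theta G) := by
        apply Finset.sum_pos
        · intro e hee
          have heK : e ∈ EK := (Finset.mem_filter.mp hee).1
          obtain ⟨hcd, h2⟩ := card_sdiff_sF G hvalK heK
          exact hpos _ _ (by omega) (valid_D G hvalK)
        · refine ⟨s(u, w'), ?_⟩
          rw [Finset.mem_filter, hEK, Finset.mem_filter]
          refine ⟨⟨SimpleGraph.mem_edgeFinset.mpr hadj, ?_⟩, by simp⟩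
          intro x hx
          rcases Sym2.mem_iff.mp hx with rfl | rfl
          · exact Finset.mem_insert_of_mem huS
          · exact Finset.mem_insert_self _ _
      linarith

lemma one_mem_Rset {e : Sym2 V} (he : e ∈ G.edgeFinset) : (1 : ℝ) ∈ Rset G := by
  have hval : Valid G (sF e) {e} := by
    constructor
    · intro f hf
      rw [Finset.mem_singleton] at hf
      exact hf ▸ he
    · intro f hf x hx
      rw [Finset.mem_singleton] at hf
      exact mem_sF.mpr (hf ▸ hx)
  refine ⟨sF e, {e}, hval, ?_⟩
  have hc : (sF e).card = 2 := card_sF (G.not_isDiag_of_mem_edgeSet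
    (SimpleGraph.mem_edgeFinset.mp he))
  have hm1 : mcount {e} 1 = 1 := by
    have : mset {e} 1 = {{e}} := by
      ext s
      rw [mem_mset, Finset.mem_singleton]
      constructor
      · rintro ⟨hsub, hcard, -⟩
        rcases Finset.subset_singleton_iff.mp hsub with rfl | rfl
        · simp at hcard
        · rfl
      · rintro rfl
        refine ⟨Finset.Subset.refl _, Finset.card_singleton e, ?_⟩
        intro a ha b hb hab
        rw [Finset.mem_singleton] at ha hb
        exact absurd (ha.trans hb.symm) hab
    rw [mcount, this, Finset.card_singleton]
  have hm2 : mcount ({e} : Finset (Sym2 V)) 2 = 0 :=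
    mcount_eq_zero_of_card (by simp)
  rw [q, hc, Polynomial.eval_finset_sum]
  rw [show (2:ℕ) + 1 = 3 by rfl]
  rw [Finset.sum_range_succ, Finset.sum_range_succ, Finset.sum_range_one]
  simp [mcount_zero, hm1, hm2]


end MR

/-- If `G` is connected and `H` is a proper subgraph of `G` (missing at least one vertex
or at least one edge of `G`), then `t(H) < t(G)`. -/
theorem maxRoot_lt_of_proper_subgraph {V W : Type*} [Fintype V] [Fintype W] [Nonempty W]
    (G : SimpleGraph V) (H : SimpleGraph W) (hG : G.Connected) (f : W ↪ V)
    (hf : ∀ a b, H.Adj a b → G.Adj (f a) (f b))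
    (hproper : ¬ (Function.Surjective f ∧ ∀ a b, G.Adj (f a) (f b) → H.Adj a b)) :
    maxRoot H < maxRoot G := by
  classical
  by_cases hedge : ∃ a b : V, G.Adj a b
  case neg =>
    exfalso
    apply hproper
    have hsub : ∀ u v : V, u = v := by
      intro u v
      obtain ⟨p⟩ := hG.preconnected u v
      cases p with
      | nil => rfl
      | cons h _ => exact absurd ⟨_, _, h⟩ hedge
    refine ⟨fun v => ⟨Classical.arbitrary W, hsub _ v⟩, fun a b hab => absurd ⟨_, _, hab⟩ hedge⟩
  case pos =>
    obtain ⟨a, b, hab⟩ := hedge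
    set θ := MR.theta G with hθdef
    have he0 : s(a, b) ∈ G.edgeFinset := SimpleGraph.mem_edgeFinset.mpr hab
    have h1R := MR.one_mem_Rset G he0
    have hθ1 : (1 : ℝ) ≤ θ := MR.le_theta G h1R
    have hθpos : (0 : ℝ) < θ := by linarith
    have hach : ∀ S E, MR.Valid G S E → (MR.q S E).eval θ = 0 →
        S = Finset.univ ∧ E = G.edgeFinset :=
      fun S E hv hr => MR.achiever_eq G hG hθpos S.card S E le_rfl hv hr
    have hθmem : θ ∈ MR.Rset G := Set.Nonempty.csSup_mem ⟨1, h1R⟩ (MR.Rset_finite G)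
    have hvalidG : MR.Valid G Finset.univ G.edgeFinset :=
      ⟨subset_refl _, fun e _ x _ => Finset.mem_univ x⟩
    have hGsub : {x : ℝ | (matchPoly G).eval x = 0} ⊆ MR.Rset G := by
      intro x hx
      rw [Set.mem_setOf_eq, MR.matchPoly_eq] at hx
      exact ⟨_, _, hvalidG, hx⟩
    have hθrootG : (matchPoly G).eval θ = 0 := by
      obtain ⟨S, E, hv, hr⟩ := hθmem
      obtain ⟨rfl, rfl⟩ := hach S E hv hr
      rw [MR.matchPoly_eq]
      exact hr
    have hmaxG : maxRoot G = θ := by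
      rw [maxRoot]
      apply le_antisymm
      · exact csSup_le ⟨θ, hθrootG⟩ (fun x hx => MR.le_theta G (hGsub hx))
      · exact le_csSup ((MR.Rset_finite G).subset hGsub).bddAbove hθrootG
    set Sim := Finset.univ.map f with hSim
    set Eim := H.edgeFinset.image (Sym2.map f) with hEim
    have hvalidH : MR.Valid G Sim Eim := by
      constructor
      · intro e' he'
        obtain ⟨e, he, rfl⟩ := Finset.mem_image.mp he'
        obtain ⟨c, d⟩ := e
        rw [Sym2.map_pair_eq]
        have hcd : H.Adj c d := (SimpleGraph.mem_edgeSet H).mp (SimpleGraph.mem_edgeFinset.mp he)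
        exact SimpleGraph.mem_edgeFinset.mpr ((SimpleGraph.mem_edgeSet G).mpr (hf c d hcd))
      · intro e' he' x hx
        obtain ⟨e, he, rfl⟩ := Finset.mem_image.mp he'
        obtain ⟨y, hy, rfl⟩ := Sym2.mem_map.mp hx
        exact Finset.mem_map.mpr ⟨y, Finset.mem_univ y, rfl⟩
    have hHsub : {x : ℝ | (matchPoly H).eval x = 0} ⊆ MR.Rset G := by
      intro x hx
      rw [Set.mem_setOf_eq, matchPoly_image H f] at hx
      exact ⟨Sim, Eim, hvalidH, hx⟩
    have hθnot : (matchPoly H).eval θ ≠ 0 := by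
      intro hr
      rw [matchPoly_image H f] at hr
      obtain ⟨hSu, hEu⟩ := hach Sim Eim hvalidH hr
      apply hproper
      constructor
      · intro v
        have hv : v ∈ Sim := by rw [hSu]; exact Finset.mem_univ v
        obtain ⟨a', -, ha'⟩ := Finset.mem_map.mp hv
        exact ⟨a', ha'⟩
      · intro c d hcd
        have hmemEim : s(f c, f d) ∈ Eim := by
          rw [hEu]
          exact SimpleGraph.mem_edgeFinset.mpr ((SimpleGraph.mem_edgeSet G).mpr hcd)
        obtain ⟨e, heH, heq⟩ := Finset.mem_image.mp hmemEim
        obtain ⟨c', d'⟩ := e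
        rw [Sym2.map_pair_eq] at heq
        have hadj' : H.Adj c' d' := (SimpleGraph.mem_edgeSet H).mp
          (SimpleGraph.mem_edgeFinset.mp heH)
        rcases Sym2.eq_iff.mp heq with ⟨h1, h2⟩ | ⟨h1, h2⟩
        · rw [show c' = c from f.injective h1, show d' = d from f.injective h2] at hadj'
          exact hadj'
        · rw [show c' = d from f.injective h1, show d' = c from f.injective h2] at hadj'
          exact hadj'.symm
    rw [hmaxG, maxRoot]
    rcases Set.eq_empty_or_nonempty {x : ℝ | (matchPoly H).eval x = 0} with hemp | hne
    · rw [hemp, Real.sSup_empty]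
      linarith
    · have hfin := (MR.Rset_finite G).subset hHsub
      have hmem := Set.Nonempty.csSup_mem hne hfin
      have hle : sSup {x : ℝ | (matchPoly H).eval x = 0} ≤ θ := MR.le_theta G (hHsub hmem)
      have hne' : sSup {x : ℝ | (matchPoly H).eval x = 0} ≠ θ := fun hc => hθnot (hc ▸ hmem)
      exact lt_of_le_of_ne hle hne'
end

section
/- A connected finite simple graph G with n vertices and m edges that contains no even cycle satisfies n - 1 \le m \le n + \lfloor (n-1)/2 \rfloor - 1 (equivalently m \le \lfloor 3(n-1)/2 \rfloor). -/
/-!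
The lower bound holds for every connected graph. For the upper bound we show `2m + 3c ≤ 3n`,
`c` the number of connected components, for every graph without even cycles, by induction on `m`.
Deleting a bridge removes one edge and creates one component. Otherwise some edge lies on a cycle
`C` of length `ℓ ≥ 3`; deleting the edges of `C` removes `ℓ` edges and leaves the `ℓ` vertices of
`C` in distinct components: a path between two of them avoiding `C` would close an even cycle with
one of the two arcs of `C`, as these arcs have lengths of different parity.
-/

open Polynomial

open Finset

namespace SimpleGraph

variable {V : Type*} {G H : SimpleGraph V}

def EvenCycleFree (G : SimpleGraph V) : Prop :=
  ∀ (u : V) (c : G.Walk u u), c.IsCycle → ¬ Even c.length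

theorem EvenCycleFree.anti (hle : H ≤ G) (hG : G.EvenCycleFree) : H.EvenCycleFree :=
  fun u c hc => by simpa using hG u (c.mapLe hle) (hc.mapLe hle)

namespace Walk

theorem mem_edges_of_length_eq_one {u v : V} {p : G.Walk u v} (h : p.length = 1) :
    s(u, v) ∈ p.edges := by
  cases p with
  | nil => simp at h
  | cons _ q => cases q with
    | nil => simp
    | cons => simp at h

theorem IsTrail.ncard_edgeSet {u v : V} {p : G.Walk u v} (hp : p.IsTrail) :
    p.edgeSet.ncard = p.length := by
  classical
  rw [← p.length_edges, ← List.toFinset_card_of_nodup hp.edges_nodup, ← Set.ncard_coe_finset]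
  congr 1
  ext
  simp [mem_edgeSet]

theorem IsCycle.card_support_toFinset {u : V} {c : G.Walk u u} [DecidableEq V] (hc : c.IsCycle) :
    c.support.toFinset.card = c.length := by
  have htail : c.support.toFinset = c.support.tail.toFinset := by
    rw [← c.cons_tail_support, List.toFinset_cons, List.tail_cons,
      insert_eq_of_mem (List.mem_toFinset.mpr (c.end_mem_tail_support hc.not_nil))]
  rw [htail, List.toFinset_card_of_nodup hc.support_nodup, List.length_tail, length_support,
    Nat.add_sub_cancel]

theorem IsPath.isCycle_append_of_edges_disjoint {u v : V} {p : G.Walk u v} {q : G.Walk v u}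
    (hp : p.IsPath) (hq : q.IsPath) (huv : u ≠ v) (hpq : p.edges.Disjoint q.edges)
    (hs : ∀ z ∈ p.support, z ∈ q.support → z = u ∨ z = v) : (p.append q).IsCycle := by
  refine hp.isCycle_append hq (fun z hzp hzq => ?_) ?_
  · have hu : u ∉ p.support.tail := by
      have := hp.support_nodup
      rw [← p.cons_tail_support, List.nodup_cons] at this
      exact this.1
    have hv : v ∉ q.support.tail := by
      have := hq.support_nodup
      rw [← q.cons_tail_support, List.nodup_cons] at this
      exact this.1
    rcases hs z (List.mem_of_mem_tail hzp) (List.mem_of_mem_tail hzq) with rfl | rfl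
    exacts [hu hzp, hv hzq]
  · by_contra! hlen
    have hp1 : p.length = 1 := by
      have := (p.eq_of_length_eq_zero).mt huv
      omega
    have hq1 : q.length = 1 := by
      have := (q.eq_of_length_eq_zero).mt huv.symm
      omega
    exact hpq (mem_edges_of_length_eq_one hp1) (Sym2.eq_swap ▸ mem_edges_of_length_eq_one hq1)

end Walk

open Walk

theorem EvenCycleFree.not_isPath_of_isCycle (hG : G.EvenCycleFree) {a b : V} {c : G.Walk a a}
    (hc : c.IsCycle) (hb : b ∈ c.support) (hab : a ≠ b) {p : G.Walk a b}
    (hpc : p.edges.Disjoint c.edges) (hs : ∀ z ∈ p.support, z ∈ c.support → z = a ∨ z = b) :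
    ¬ p.IsPath := by
  classical
  intro hp
  set q₁ := c.takeUntil b hb
  set q₂ := c.dropUntil b hb
  have hspec : q₁.append q₂ = c := c.take_spec hb
  have hq₁ : q₁.IsPath := hc.isPath_takeUntil hb
  have hq₂ : q₂.IsPath := (hspec ▸ hc).isPath_of_append_right (not_nil_of_ne hab)
  have hcyc₁ : (q₁.append p.reverse).IsCycle := by
    refine hq₁.isCycle_append_of_edges_disjoint hp.reverse hab ?_ fun z hz₁ hz₂ => ?_
    · rw [edges_reverse, List.disjoint_reverse_right]
      exact fun e he₁ he₂ => hpc he₂ (c.edges_takeUntil_subset_edges hb he₁)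
    · rw [support_reverse, List.mem_reverse] at hz₂
      exact hs z hz₂ (c.support_takeUntil_subset_support hb hz₁)
  have hcyc₂ : (p.append q₂).IsCycle := by
    refine hp.isCycle_append_of_edges_disjoint hq₂ hab ?_ fun z hz₁ hz₂ => ?_
    · exact fun e he₁ he₂ => hpc he₁ (c.edges_dropUntil_subset_edges hb he₂)
    · exact hs z hz₁ (c.support_dropUntil_subset_support hb hz₂)
  have hodd := hG a c hc
  have hodd₁ := hG a _ hcyc₁
  have hodd₂ := hG a _ hcyc₂
  rw [← hspec, length_append] at hodd
  rw [length_append, length_reverse] at hodd₁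
  rw [length_append] at hodd₂
  simp only [Nat.even_add] at hodd hodd₁ hodd₂
  tauto

theorem EvenCycleFree.not_reachable_deleteEdges_of_isCycle (hG : G.EvenCycleFree) {u : V}
    {c : G.Walk u u} (hc : c.IsCycle) {x y : V} (hx : x ∈ c.support) (hy : y ∈ c.support)
    (hxy : x ≠ y) : ¬ (G.deleteEdges c.edgeSet).Reachable x y := by
  classical
  intro hreach
  obtain ⟨p, hp⟩ := hreach.exists_isPath
  clear hreach
  -- a shortest path between two vertices of `c` meets `c` only at its ends
  induction hlen : p.length using Nat.strong_induction_on generalizing y with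
  | _ n ih =>
  by_cases hint : ∃ z ∈ p.support, z ∈ c.support ∧ z ≠ x ∧ z ≠ y
  · obtain ⟨z, hzp, hzc, hzx, hzy⟩ := hint
    exact ih _ (hlen ▸ length_takeUntil_lt_length hzp hzy) hzc hzx.symm _ (hp.takeUntil hzp) rfl
  push Not at hint
  refine hG.not_isPath_of_isCycle (hc.rotate hx) ((c.mem_support_rotate_iff x hx).mpr hy) hxy
    (p := p.mapLe (deleteEdges_le _)) ?_ ?_ (hp.mapLe _)
  · intro e he₁ he₂
    rw [edges_mapLe_eq_edges] at he₁
    have := p.edges_subset_edgeSet he₁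
    rw [edgeSet_deleteEdges] at this
    exact this.2 ((c.rotate_edges x hx).mem_iff.mp he₂)
  · intro z hzp hzc
    rw [support_mapLe_eq_support] at hzp
    rw [mem_support_rotate_iff] at hzc
    exact or_iff_not_imp_left.mpr (hint z hzp hzc)

theorem card_connectedComponent_add_card_le [Finite V] (hle : H ≤ G) {v : V} {s : Finset V}
    (hs : ∀ x ∈ s, G.Reachable v x) (hH : (s : Set V).Pairwise fun x y => ¬ H.Reachable x y) :
    Nat.card G.ConnectedComponent + #s ≤ Nat.card H.ConnectedComponent + 1 := by
  classical
  have := Fintype.ofFinite G.ConnectedComponent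
  have := Fintype.ofFinite H.ConnectedComponent
  have hφ := ConnectedComponent.surjective_map_ofLE hle
  let S₁ := (univ.erase (G.connectedComponentMk v)).image (Function.surjInv hφ)
  let S₂ := s.image H.connectedComponentMk
  have h₁ : #S₁ = Fintype.card G.ConnectedComponent - 1 := by
    rw [card_image_of_injective _ (Function.injective_surjInv hφ), card_erase_of_mem (mem_univ _),
      card_univ]
  have h₂ : #S₂ = #s := card_image_of_injOn fun x hx y hy hxy =>
    by_contra fun hne => hH hx hy hne (ConnectedComponent.exact hxy)
  have hdisj : Disjoint S₁ S₂ := by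
    simp only [S₁, S₂, Finset.disjoint_left, mem_image, mem_erase]
    rintro _ ⟨d, ⟨hd, -⟩, rfl⟩ ⟨x, hx, hxd⟩
    apply hd
    rw [← Function.surjInv_eq hφ d, ← hxd]
    exact ConnectedComponent.sound (hs x hx).symm
  have hunion := card_le_univ (S₁ ∪ S₂)
  rw [card_union_of_disjoint hdisj, h₁, h₂] at hunion
  have : 0 < Fintype.card G.ConnectedComponent :=
    Fintype.card_pos_iff.mpr ⟨G.connectedComponentMk v⟩
  rw [Nat.card_eq_fintype_card, Nat.card_eq_fintype_card]
  omega

theorem IsBridge.card_connectedComponent_lt [Finite V] {x y : V} (hadj : G.Adj x y)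
    (hbr : G.IsBridge s(x, y)) :
    Nat.card G.ConnectedComponent < Nat.card (G.deleteEdges {s(x, y)}).ConnectedComponent := by
  classical
  have := card_connectedComponent_add_card_le (deleteEdges_le {s(x, y)}) (v := x) (s := {x, y})
    (by simpa using hadj.reachable)
    (by rw [coe_pair, Set.pairwise_pair]; exact fun _ => ⟨hbr, fun h => hbr h.symm⟩)
  rw [card_pair hadj.ne] at this
  omega

theorem EvenCycleFree.card_connectedComponent_add_length_le [Finite V] (hG : G.EvenCycleFree)
    {u : V} {c : G.Walk u u} (hc : c.IsCycle) :
    Nat.card G.ConnectedComponent + c.length ≤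
      Nat.card (G.deleteEdges c.edgeSet).ConnectedComponent + 1 := by
  classical
  rw [← hc.card_support_toFinset]
  refine card_connectedComponent_add_card_le (deleteEdges_le _) (v := u) ?_ ?_
  · intro x hx
    exact ⟨c.takeUntil x (List.mem_toFinset.mp hx)⟩
  · intro x hx y hy hxy
    exact hG.not_reachable_deleteEdges_of_isCycle hc (List.mem_toFinset.mp hx)
      (List.mem_toFinset.mp hy) hxy

theorem ncard_edgeSet_deleteEdges_add [Finite V] {s : Set (Sym2 V)} (hs : s ⊆ G.edgeSet) :
    (G.deleteEdges s).edgeSet.ncard + s.ncard = G.edgeSet.ncard := by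
  rw [edgeSet_deleteEdges, Set.ncard_sdiff_add_ncard_of_subset hs]

theorem EvenCycleFree.two_mul_ncard_edgeSet_add_three_mul_card_connectedComponent_le [Finite V]
    (hG : G.EvenCycleFree) :
    2 * G.edgeSet.ncard + 3 * Nat.card G.ConnectedComponent ≤ 3 * Nat.card V := by
  induction hm : G.edgeSet.ncard using Nat.strong_induction_on generalizing G with
  | _ m ih =>
  rcases G.edgeSet.eq_empty_or_nonempty with he | ⟨e, he⟩
  · have := Nat.card_le_card_of_surjective G.connectedComponentMk fun c => c.exists_rep
    rw [← hm, he, Set.ncard_empty]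
    omega
  induction e using Sym2.ind with
  | _ x y =>
  by_cases hbr : G.IsBridge s(x, y)
  · have hcard := ncard_edgeSet_deleteEdges_add (Set.singleton_subset_iff.mpr he)
    rw [Set.ncard_singleton] at hcard
    have := ih _ (by omega) (G := G.deleteEdges {s(x, y)}) (hG.anti (deleteEdges_le _)) rfl
    have := IsBridge.card_connectedComponent_lt (x := x) (y := y) he hbr
    omega
  · obtain ⟨u, c, hc, -⟩ : ∃ u, ∃ c : G.Walk u u, c.IsCycle ∧ s(x, y) ∈ c.edges := by
      simpa [isBridge_iff_forall_cycle_notMem he] using hbr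
    have hcard := ncard_edgeSet_deleteEdges_add (s := c.edgeSet) c.edges_subset_edgeSet
    rw [hc.isTrail.ncard_edgeSet] at hcard
    have := hc.three_le_length
    have := ih _ (by omega) (G := G.deleteEdges c.edgeSet) (hG.anti (deleteEdges_le _)) rfl
    have := hG.card_connectedComponent_add_length_le hc
    omega

end SimpleGraph

/-- A connected graph with no even cycle on `n` vertices and `m` edges satisfies
`n - 1 ≤ m ≤ n + ⌊(n-1)/2⌋ - 1`. -/
theorem odd_cycle_graph_size_bounds {V : Type*} [Fintype V] (G : SimpleGraph V)
    (hconn : G.Connected)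
    (hodd : ∀ (u : V) (c : G.Walk u u), c.IsCycle → ¬ Even c.length) :
    Fintype.card V - 1 ≤ G.edgeSet.ncard ∧
      G.edgeSet.ncard ≤ Fintype.card V + (Fintype.card V - 1) / 2 - 1 := by
  have hlower := hconn.card_vert_le_card_edgeSet_add_one
  have hupper :=
    SimpleGraph.EvenCycleFree.two_mul_ncard_edgeSet_add_three_mul_card_connectedComponent_le hodd
  have hone : Nat.card G.ConnectedComponent = 1 :=
    Nat.card_eq_one_iff_unique.mpr ⟨hconn.preconnected.subsingleton_connectedComponent,
      ⟨G.connectedComponentMk hconn.nonempty.some⟩⟩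
  rw [Nat.card_coe_set_eq, Nat.card_eq_fintype_card] at hlower
  rw [hone, Nat.card_eq_fintype_card] at hupper
  omega
end

section
/- In a finite simple graph with no even cycle, any two distinct cycles are edge-disjoint (equivalently, every such graph is a cactus: every block is an edge or a cycle). -/
open Polynomial

/-!
An *ear* of a cycle `c` is a path between two distinct vertices of `c` that meets `c` only in its
endpoints and uses no edge of `c`. A cycle with an ear lies in a theta graph: `c` splits at the
ends of the ear into two paths of lengths `p` and `q`, and with an ear of length `h` the three
cycles of the theta graph have lengths `p + q`, `p + h` and `q + h`. Their sum is even, so one of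
them is even.

If two cycles `c` and `d` pass through the same two distinct vertices `x`, `y` (for instance the
ends of a common edge) and `d` has an edge outside `c`, then one of the two arcs of `d` between `x`
and `y` leaves `c`, and its first excursion away from `c` is an ear of `c`.
-/

namespace SimpleGraph.Walk

variable {V : Type*} {G : SimpleGraph V}

structure IsEar {a b u w : V} (H : G.Walk a b) (c : G.Walk u w) : Prop where
  isPath : H.IsPath
  ne : a ≠ b
  start_mem : a ∈ c.support
  end_mem : b ∈ c.support
  edges_notMem : ∀ e ∈ H.edges, e ∉ c.edges
  eq_or_eq_of_mem : ∀ v ∈ H.support, v ∈ c.support → v = a ∨ v = b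

lemma IsPath.start_notMem_support_tail {u v : V} {p : G.Walk u v} (hp : p.IsPath) :
    u ∉ p.support.tail := by
  have hnodup := hp.support_nodup
  rw [← p.cons_tail_support, List.nodup_cons] at hnodup
  exact hnodup.1

lemma isCycle_append_of_disjoint {u v : V} {p : G.Walk u v} {q : G.Walk v u}
    (hp : p.IsPath) (hq : q.IsPath) (huv : u ≠ v)
    (hs : p.support.tail.Disjoint q.support.tail) (he : p.edges.Disjoint q.edges) :
    (p.append q).IsCycle := by
  rw [isCycle_def, isTrail_append, tail_support_append, List.nodup_append']
  refine ⟨⟨hp.isTrail, hq.isTrail, he⟩, fun hnil => ?_,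
    hp.support_nodup.tail, hq.support_nodup.tail, hs⟩
  have := congrArg length hnil
  rw [length_append, length_nil] at this
  exact huv (p.eq_of_length_eq_zero (by omega))

lemma IsEar.isCycle_append {u w a b : V} {c : G.Walk u w} {H : G.Walk a b} (hH : H.IsEar c)
    {p : G.Walk b a} (hp : p.IsPath) (hps : p.support ⊆ c.support) (hpe : p.edges ⊆ c.edges) :
    (H.append p).IsCycle := by
  refine isCycle_append_of_disjoint hH.isPath hp hH.ne (fun v hvH hvp => ?_)
    (fun e heH hep => hH.edges_notMem e heH (hpe hep))
  rcases hH.eq_or_eq_of_mem v (List.mem_of_mem_tail hvH) (hps (List.mem_of_mem_tail hvp))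
    with h | h
  · exact hH.isPath.start_notMem_support_tail (h ▸ hvH)
  · exact hp.start_notMem_support_tail (h ▸ hvp)

lemma IsCycle.exists_isPath_append_eq_rotate [DecidableEq V] {u a b : V} {c : G.Walk u u}
    (hc : c.IsCycle) (ha : a ∈ c.support) (hb : b ∈ c.support) (hab : a ≠ b) :
    ∃ (p : G.Walk a b) (q : G.Walk b a), p.IsPath ∧ q.IsPath ∧ p.append q = c.rotate a ha := by
  have hc' := hc.rotate ha
  have hb' : b ∈ (c.rotate a ha).support := (c.mem_support_rotate_iff a ha).2 hb
  refine ⟨_, _, hc'.isPath_takeUntil hb', ?_, take_spec _ hb'⟩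
  rw [← take_spec _ hb'] at hc'
  exact hc'.isPath_of_append_right (not_nil_of_ne hab)

lemma IsEar.exists_isCycle_even {u a b : V} {c : G.Walk u u} {H : G.Walk a b}
    (hH : H.IsEar c) (hc : c.IsCycle) : ∃ (w : V) (q : G.Walk w w), q.IsCycle ∧ Even q.length := by
  classical
  obtain ⟨p, q, hp, hq, hpq⟩ := hc.exists_isPath_append_eq_rotate hH.start_mem hH.end_mem hH.ne
  have hsupp : ∀ v, v ∈ p.support ∨ v ∈ q.support → v ∈ c.support := by
    intro v hv
    rwa [← c.mem_support_rotate_iff a hH.start_mem, ← hpq, mem_support_append_iff]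
  have hedges : ∀ e, e ∈ p.edges ∨ e ∈ q.edges → e ∈ c.edges := by
    intro e he
    rwa [← (c.rotate_edges a hH.start_mem).perm.mem_iff, ← hpq, edges_append, List.mem_append]
  have hlen : p.length + q.length = c.length := by rw [← length_append, hpq, length_rotate]
  have hcp : (H.append p.reverse).IsCycle := hH.isCycle_append hp.reverse
    (fun v hv => hsupp v (.inl (by simpa using hv)))
    (fun e he => hedges e (.inl (by simpa using he)))
  have hcq : (H.append q).IsCycle := hH.isCycle_append hq
    (fun v hv => hsupp v (.inr hv)) (fun e he => hedges e (.inr he))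
  by_contra! hodd
  have := hodd _ _ hc
  have := hodd _ _ hcp
  have := hodd _ _ hcq
  simp only [length_append, length_reverse, Nat.not_even_iff] at *
  omega

lemma exists_append_eq_of_end_mem (S : Set V) {a b : V} (t : G.Walk a b) (hb : b ∈ S) :
    ∃ x ∈ S, ∃ (t₁ : G.Walk a x) (t₂ : G.Walk x b),
      t₁.append t₂ = t ∧ ∀ v ∈ t₁.support, v ∈ S → v = x := by
  induction t with
  | nil => exact ⟨_, hb, nil, nil, rfl, by simp⟩
  | @cons a z b h t ih =>
    by_cases ha : a ∈ S
    · exact ⟨a, ha, nil, cons h t, rfl, by simp⟩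
    · obtain ⟨x, hx, t₁, t₂, rfl, ht₁⟩ := ih hb
      refine ⟨x, hx, cons h t₁, t₂, rfl, ?_⟩
      simp only [support_cons, List.mem_cons, forall_eq_or_imp]
      exact ⟨fun ha' => absurd ha' ha, ht₁⟩

lemma exists_isEar_of_cons {u w a z b : V} (c : G.Walk u w) (h : G.Adj a z) {t : G.Walk z b}
    (ht : (cons h t).IsPath) (ha : a ∈ c.support) (hb : b ∈ c.support)
    (haz : s(a, z) ∉ c.edges) : ∃ (x y : V) (H : G.Walk x y), H.IsEar c := by
  obtain ⟨x, hx, t₁, t₂, rfl, ht₁⟩ := exists_append_eq_of_end_mem {v | v ∈ c.support} t hb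
  rw [← cons_append] at ht
  have hH := ht.of_append_left
  have hat₁ := ((cons_isPath_iff _ _).1 hH).2
  refine ⟨a, x, cons h t₁, hH, fun hax => hat₁ (hax ▸ t₁.end_mem_support), ha, hx, ?_, ?_⟩
  · simp only [edges_cons, List.mem_cons, forall_eq_or_imp]
    refine ⟨haz, fun e he hec => ?_⟩
    -- both ends of an edge of `c` lie on `c`, but only one vertex of `t₁` does
    induction e with
    | _ p q =>
      have hp := ht₁ p (t₁.fst_mem_support_of_mem_edges he) (c.fst_mem_support_of_mem_edges hec)
      have hq := ht₁ q (t₁.snd_mem_support_of_mem_edges he) (c.snd_mem_support_of_mem_edges hec)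
      exact (t₁.adj_of_mem_edges he).ne (hp.trans hq.symm)
  · intro v hv hvc
    rcases List.mem_cons.1 hv with rfl | hv
    · exact .inl rfl
    · exact .inr (ht₁ v hv hvc)

lemma exists_isEar_of_isPath {u w a b : V} (c : G.Walk u w) {t : G.Walk a b} (ht : t.IsPath)
    (ha : a ∈ c.support) (hb : b ∈ c.support) {f : Sym2 V} (hft : f ∈ t.edges)
    (hfc : f ∉ c.edges) : ∃ (x y : V) (H : G.Walk x y), H.IsEar c := by
  induction t with
  | nil => simp at hft
  | @cons a z b h t ih =>
    by_cases haz : s(a, z) ∈ c.edges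
    · have hf : f ∈ t.edges := by
        rw [edges_cons, List.mem_cons] at hft
        exact hft.resolve_left (by rintro rfl; exact hfc haz)
      exact ih ht.of_cons (c.snd_mem_support_of_mem_edges haz) hb hf
    · exact exists_isEar_of_cons c h ht ha hb haz

lemma IsCycle.exists_isEar {u w v x y : V} (c : G.Walk u w) {d : G.Walk v v} (hd : d.IsCycle)
    (hxy : x ≠ y) (hxc : x ∈ c.support) (hyc : y ∈ c.support) (hxd : x ∈ d.support)
    (hyd : y ∈ d.support) {f : Sym2 V} (hfd : f ∈ d.edges) (hfc : f ∉ c.edges) :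
    ∃ (a b : V) (H : G.Walk a b), H.IsEar c := by
  classical
  obtain ⟨p, q, hp, hq, hpq⟩ := hd.exists_isPath_append_eq_rotate hxd hyd hxy
  rw [← (d.rotate_edges x hxd).perm.mem_iff, ← hpq, edges_append, List.mem_append] at hfd
  rcases hfd with hfp | hfq
  · exact exists_isEar_of_isPath c hp hxc hyc hfp hfc
  · exact exists_isEar_of_isPath c hq hyc hxc hfq hfc

lemma IsCycle.edges_subset_of_mem_support_of_forall_odd
    (hodd : ∀ (w : V) (q : G.Walk w w), q.IsCycle → ¬ Even q.length)
    {u v x y : V} {c : G.Walk u u} {d : G.Walk v v} (hc : c.IsCycle) (hd : d.IsCycle)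
    (hxy : x ≠ y) (hxc : x ∈ c.support) (hyc : y ∈ c.support) (hxd : x ∈ d.support)
    (hyd : y ∈ d.support) : c.edges ⊆ d.edges := by
  intro f hfc
  by_contra hfd
  obtain ⟨a, b, H, hH⟩ := hc.exists_isEar d hxy hxd hyd hxc hyc hfc hfd
  obtain ⟨w, q, hq, heven⟩ := hH.exists_isCycle_even hd
  exact hodd w q hq heven

end SimpleGraph.Walk

theorem odd_cycle_graph_cycles_edge_disjoint_general {V : Type*} (G : SimpleGraph V)
    (hodd : ∀ (u : V) (c : G.Walk u u), c.IsCycle → ¬ Even c.length)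
    (u v : V) (c : G.Walk u u) (d : G.Walk v v) (hc : c.IsCycle) (hd : d.IsCycle)
    (e : Sym2 V) (hec : e ∈ c.edges) (hed : e ∈ d.edges) :
    ∀ f : Sym2 V, f ∈ c.edges ↔ f ∈ d.edges := by
  induction e with
  | _ x y =>
    have hxy : x ≠ y := (c.adj_of_mem_edges hec).ne
    have hxc := c.fst_mem_support_of_mem_edges hec
    have hyc := c.snd_mem_support_of_mem_edges hec
    have hxd := d.fst_mem_support_of_mem_edges hed
    have hyd := d.snd_mem_support_of_mem_edges hed
    intro f
    exact ⟨fun hf => hc.edges_subset_of_mem_support_of_forall_odd hodd hd hxy hxc hyc hxd hyd hf,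
      fun hf => hd.edges_subset_of_mem_support_of_forall_odd hodd hc hxy hxd hyd hxc hyc hf⟩

/-- In a graph with no even cycle any two cycles sharing an edge have the same edge set,
i.e. distinct cycles are edge-disjoint. -/
theorem odd_cycle_graph_cycles_edge_disjoint {V : Type*} [Fintype V] (G : SimpleGraph V)
    (hodd : ∀ (u : V) (c : G.Walk u u), c.IsCycle → ¬ Even c.length)
    (u v : V) (c : G.Walk u u) (d : G.Walk v v) (hc : c.IsCycle) (hd : d.IsCycle)
    (e : Sym2 V) (hec : e ∈ c.edges) (hed : e ∈ d.edges) :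
    ∀ f : Sym2 V, f ∈ c.edges ↔ f ∈ d.edges :=
  odd_cycle_graph_cycles_edge_disjoint_general G hodd u v c d hc hd e hec hed
end

section
/- If G is a connected finite simple graph with no even cycle, u and v are vertices at distance 2 on a common cycle C of G of length at least 5 (so that there is a path u-w-v along C), then the graph G' = KT(G, u, v) obtained by the Kelmans transformation with beneficiary u is connected. -/
open Polynomial

/-- `w` is a neighbour of `v` that gets moved to `u` by the Kelmans transformation. -/
def movedNbr {V : Type*} (G : SimpleGraph V) (u v w : V) : Prop :=
  G.Adj v w ∧ w ≠ u ∧ ¬ G.Adj u w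

/-- The Kelmans transformation of `G` with beneficiary `u` and co-beneficiary `v`:
every edge `vw` with `w ≠ u`, `w` not adjacent to `u`, is replaced by the edge `uw`. -/
def kelmans {V : Type*} (G : SimpleGraph V) (u v : V) : SimpleGraph V where
  Adj a b :=
    (G.Adj a b ∧ ¬ (a = v ∧ movedNbr G u v b) ∧ ¬ (b = v ∧ movedNbr G u v a))
    ∨ (a = u ∧ movedNbr G u v b) ∨ (b = u ∧ movedNbr G u v a)
  symm := by
    constructor
    intro a b h
    rcases h with ⟨h1, h2, h3⟩ | h | h
    · exact Or.inl ⟨h1.symm, h3, h2⟩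
    · exact Or.inr (Or.inr h)
    · exact Or.inr (Or.inl h)
  loopless := by
    constructor
    intro a h
    rcases h with ⟨h1, _, _⟩ | ⟨rfl, _, hne, _⟩ | ⟨rfl, _, hne, _⟩
    · exact (G.ne_of_adj h1) rfl
    · exact hne rfl
    · exact hne rfl

/-
Moving the edges `vw` to `uw` can only disconnect `v` itself: every other endpoint of a moved
edge becomes a neighbour of `u`. So once `v` stays reachable from `u` — here through the common
neighbour `w`, whose edges to `u` and `v` are never moved — every walk of `G` out of `u` can be
followed in `KT(G, u, v)`.
-/

open SimpleGraph

section Kelmans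

variable {V : Type*} {G : SimpleGraph V} {u v w a b : V}

lemma kelmans_adj_of_adj_of_ne (hab : G.Adj a b) (ha : a ≠ v) (hb : b ≠ v) :
    (kelmans G u v).Adj a b :=
  Or.inl ⟨hab, fun h => ha h.1, fun h => hb h.1⟩

lemma kelmans_adj_of_movedNbr (hb : movedNbr G u v b) : (kelmans G u v).Adj u b :=
  Or.inr (Or.inl ⟨rfl, hb⟩)

lemma kelmans_adj_of_not_movedNbr (hb : G.Adj v b) (hm : ¬ movedNbr G u v b) :
    (kelmans G u v).Adj v b :=
  Or.inl ⟨hb, fun h => hm h.2, fun h => hb.ne h.1.symm⟩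

lemma kelmans_adj_of_adj_of_adj (huw : G.Adj u w) (hwv : G.Adj w v) :
    (kelmans G u v).Adj u w ∧ (kelmans G u v).Adj w v :=
  ⟨Or.inl ⟨huw, fun h => h.2.2.2 huw, fun h => h.2.2.1 rfl⟩,
    Or.inl ⟨hwv, fun h => hwv.ne h.1, fun h => h.2.2.2 huw⟩⟩

lemma kelmans_reachable_of_adj (huv : (kelmans G u v).Reachable u v)
    (ha : (kelmans G u v).Reachable u a) (hab : G.Adj a b) :
    (kelmans G u v).Reachable u b := by
  by_cases hbv : b = v
  · exact hbv ▸ huv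
  by_cases hav : a = v
  · subst hav
    by_cases hm : movedNbr G u a b
    · exact (kelmans_adj_of_movedNbr hm).reachable
    · exact ha.trans (kelmans_adj_of_not_movedNbr hab hm).reachable
  · exact ha.trans (kelmans_adj_of_adj_of_ne hab hav hbv).reachable

lemma kelmans_reachable_of_walk (huv : (kelmans G u v).Reachable u v) (p : G.Walk a b)
    (ha : (kelmans G u v).Reachable u a) : (kelmans G u v).Reachable u b := by
  induction p with
  | nil => exact ha
  | cons hab _ ih => exact ih (kelmans_reachable_of_adj huv ha hab)

lemma SimpleGraph.Connected.kelmans (hG : G.Connected) (huv : (kelmans G u v).Reachable u v) :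
    (kelmans G u v).Connected :=
  (connected_iff_exists_forall_reachable _).mpr
    ⟨u, fun x => (hG.preconnected u x).elim fun p => kelmans_reachable_of_walk huv p .rfl⟩

end Kelmans

theorem kelmans_connected_general {V : Type*} (G : SimpleGraph V)
    (hconn : G.Connected)
    (u v w : V)
    (c : G.Walk u u)
    (h1 : s(u, w) ∈ c.edges) (h2 : s(w, v) ∈ c.edges) :
    (kelmans G u v).Connected := by
  have huw : G.Adj u w := c.adj_of_mem_edges h1
  have hwv : G.Adj w v := c.adj_of_mem_edges h2
  obtain ⟨kuw, kwv⟩ := kelmans_adj_of_adj_of_adj huw hwv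
  exact hconn.kelmans (kuw.reachable.trans kwv.reachable)

/-- If `G` is a connected graph with no even cycle, and `u, v` are at distance `2` along a
common cycle of length at least 5 (via the path `u-w-v` on the cycle), then the Kelmans
transformation `KT(G,u,v)` yields a connected graph. -/
theorem kelmans_connected {V : Type*} [Fintype V] (G : SimpleGraph V)
    (hconn : G.Connected)
    (hodd : ∀ (z : V) (c : G.Walk z z), c.IsCycle → ¬ Even c.length)
    (u v w : V) (hne : u ≠ v)
    (c : G.Walk u u) (hc : c.IsCycle) (hlen : 5 ≤ c.length)
    (h1 : s(u, w) ∈ c.edges) (h2 : s(w, v) ∈ c.edges) :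
    (kelmans G u v).Connected :=
  kelmans_connected_general G hconn u v w c h1 h2
end

section
/- If H is a spanning subgraph of a finite simple graph G, then G \succeq H, i.e., m(H, x) \ge m(G, x) for all real x \ge t(G). -/
open Polynomial

/-!
Write `m_S` for the matching polynomial of the induced subgraph `G[S]`. Splitting the matchings
by whether they cover a vertex `u`, resp. contain an edge `uv`, gives the recursions
`m_S = x m_{S-u} - ∑_{v ~ u} m_{S-u-v}` and `m_G = m_{G-uv} - m_{G-u-v}`.
Positivity of `m_S` on `(a, ∞)` passes to `m_{S-u}`: otherwise let `r > a` be the largest root of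
`m_{S-u}`; by induction every `m_{S-u-v}` is positive beyond `r`, hence nonnegative at `r`, and
the vertex recursion gives `m_S(r) ≤ 0`. So beyond `t(G)` every `m_{G-u-v}` is positive and the
edge recursion gives `m_G ≤ m_{G-uv}` there, which also keeps `m_{G-uv}` positive. Deleting the
edges of `G` not in `H` one at a time, and passing to the limit at `t(G)`, proves the claim.
-/

open Finset

lemma Finset.card_erase_erase_add_two_s14 {α : Type*} [DecidableEq α] {s : Finset α} {a b : α}
    (hab : a ≠ b) (ha : a ∈ s) (hb : b ∈ s) : ((s.erase a).erase b).card + 2 = s.card := by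
  rw [card_erase_of_mem (mem_erase.2 ⟨hab.symm, hb⟩), card_erase_of_mem ha]
  have : 2 ≤ s.card := by
    simpa [card_pair hab] using card_le_card (insert_subset ha (singleton_subset_iff.2 hb))
  omega

namespace Polynomial

variable {p q : ℝ[X]} {a y : ℝ}

lemma eval_le_eval_of_forall_gt (h : ∀ y, a < y → p.eval y ≤ q.eval y) :
    p.eval a ≤ q.eval a :=
  le_on_closure (s := Set.Ioi a) h p.continuousOn q.continuousOn
    (by rw [closure_Ioi]; exact Set.self_mem_Ici)

namespace Monic

lemma exists_isRoot_ge_of_eval_nonpos_s14 (hp : p.Monic) (hy : p.eval y ≤ 0) :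
    ∃ r, y ≤ r ∧ p.IsRoot r := by
  have hdeg : 0 < p.degree := by
    refine natDegree_pos_iff_degree_pos.1 (Nat.pos_of_ne_zero fun h => ?_)
    rw [hp.natDegree_eq_zero] at h
    norm_num [h] at hy
  have htop := p.tendsto_atTop_of_leadingCoeff_nonneg hdeg (by simp [hp.leadingCoeff])
  obtain ⟨b, hb⟩ := Filter.eventually_atTop.1 (htop.eventually_ge_atTop 0)
  obtain ⟨r, hr, hr0⟩ := intermediate_value_Icc (le_max_left y b) p.continuousOn
    ⟨hy, hb _ (le_max_right y b)⟩
  exact ⟨r, hr.1, hr0⟩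

lemma le_sSup_roots_of_eval_nonpos (hp : p.Monic) (hy : p.eval y ≤ 0) :
    y ≤ sSup {x | p.eval x = 0} ∧ p.eval (sSup {x | p.eval x = 0}) = 0 := by
  have hfin : {x | p.eval x = 0}.Finite := finite_setOfPred_isRoot hp.ne_zero
  obtain ⟨r, hyr, hr⟩ := hp.exists_isRoot_ge_of_eval_nonpos_s14 hy
  exact ⟨hyr.trans (le_csSup hfin.bddAbove hr), Set.Nonempty.csSup_mem ⟨r, hr⟩ hfin⟩

lemma eval_pos_of_sSup_roots_lt (hp : p.Monic) (hy : sSup {x | p.eval x = 0} < y) :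
    0 < p.eval y := by
  by_contra! h
  exact hy.not_ge (hp.le_sSup_roots_of_eval_nonpos h).1

end Monic

end Polynomial

namespace SimpleGraph

variable {V : Type*} (G : SimpleGraph V)

structure IsMatchingIn (S : Finset V) (M : Finset (Sym2 V)) : Prop where
  mem_edgeSet : ∀ e ∈ M, e ∈ G.edgeSet
  mem_of_mem : ∀ e ∈ M, ∀ x ∈ e, x ∈ S
  notMem_of_ne : ∀ e ∈ M, ∀ f ∈ M, e ≠ f → ∀ x ∈ e, x ∉ f

open scoped Classical in
noncomputable def matchingsIn (S : Finset V) : Finset (Finset (Sym2 V)) :=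
  S.sym2.powerset.filter (G.IsMatchingIn S)

/-- The matching polynomial of the induced subgraph `G[S]`. -/
noncomputable def matchPolyOn (S : Finset V) : ℝ[X] :=
  ∑ M ∈ G.matchingsIn S, C ((-1 : ℝ) ^ M.card) * X ^ (S.card - 2 * M.card)

variable {G} {S : Finset V} {M : Finset (Sym2 V)} {u v : V} {x : ℝ}

lemma IsMatchingIn.mk_notMem_of_notMem (hM : G.IsMatchingIn S M) (hu : u ∉ S) : s(u, v) ∉ M :=
  fun he => hu (hM.mem_of_mem _ he u (Sym2.mem_mk_left u v))

lemma isMatchingIn_deleteEdges_iff {e : Sym2 V} :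
    (G.deleteEdges {e}).IsMatchingIn S M ↔ G.IsMatchingIn S M ∧ e ∉ M := by
  have hedge : ∀ f, f ∈ (G.deleteEdges {e}).edgeSet ↔ f ∈ G.edgeSet ∧ f ≠ e := by simp
  constructor
  · intro hM
    refine ⟨⟨fun f hf => ((hedge f).1 (hM.mem_edgeSet f hf)).1, hM.mem_of_mem,
      hM.notMem_of_ne⟩, fun he => ((hedge e).1 (hM.mem_edgeSet e he)).2 rfl⟩
  · rintro ⟨hM, he⟩
    refine ⟨fun f hf => (hedge f).2 ⟨hM.mem_edgeSet f hf, ?_⟩, hM.mem_of_mem,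
      hM.notMem_of_ne⟩
    rintro rfl; exact he hf

@[simp]
lemma mem_matchingsIn : M ∈ G.matchingsIn S ↔ G.IsMatchingIn S M := by
  classical
  simp only [matchingsIn, mem_filter, mem_powerset, and_iff_right_iff_imp]
  exact fun hM e he => mem_sym2_iff.2 (hM.mem_of_mem e he)

section DecidableEq

variable [DecidableEq V]

namespace IsMatchingIn

lemma erase_erase (hM : G.IsMatchingIn S M) (he : s(u, v) ∈ M) :
    G.IsMatchingIn ((S.erase u).erase v) (M.erase s(u, v)) where
  mem_edgeSet f hf := hM.mem_edgeSet f (mem_of_mem_erase hf)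
  mem_of_mem f hf x hx := by
    have hdisj := hM.notMem_of_ne _ he f (mem_of_mem_erase hf) (ne_of_mem_erase hf).symm
    refine mem_erase.2 ⟨?_, mem_erase.2 ⟨?_, hM.mem_of_mem f (mem_of_mem_erase hf) x hx⟩⟩
    · rintro rfl; exact hdisj x (Sym2.mem_mk_right u x) hx
    · rintro rfl; exact hdisj x (Sym2.mem_mk_left x v) hx
  notMem_of_ne f hf g hg := hM.notMem_of_ne f (mem_of_mem_erase hf) g (mem_of_mem_erase hg)

lemma insert_mk (hM : G.IsMatchingIn ((S.erase u).erase v) M) (h : G.Adj u v) (hu : u ∈ S)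
    (hv : v ∈ S) : G.IsMatchingIn S (insert s(u, v) M) := by
  have hsub : (S.erase u).erase v ⊆ S := (erase_subset _ _).trans (erase_subset _ _)
  have hout : ∀ x ∈ s(u, v), x ∉ (S.erase u).erase v := by
    simp only [Sym2.mem_iff, mem_erase]; tauto
  refine ⟨?_, ?_, ?_⟩
  · simp only [mem_insert, forall_eq_or_imp]
    exact ⟨h, hM.mem_edgeSet⟩
  · simp only [mem_insert, forall_eq_or_imp, Sym2.mem_iff]
    exact ⟨⟨hu, fun x hx => hx ▸ hv⟩, fun f hf x hx => hsub (hM.mem_of_mem f hf x hx)⟩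
  · intro f hf g hg hfg x hxf hxg
    rcases mem_insert.1 hf with rfl | hf <;> rcases mem_insert.1 hg with rfl | hg
    · exact hfg rfl
    · exact hout x hxf (hM.mem_of_mem g hg x hxg)
    · exact hout x hxg (hM.mem_of_mem f hf x hxf)
    · exact hM.notMem_of_ne f hf g hg hfg x hxf hxg

lemma two_mul_card_le (hM : G.IsMatchingIn S M) : 2 * M.card ≤ S.card := by
  induction M using Finset.induction_on generalizing S with
  | empty => simp
  | @insert e M he ih =>
    induction e using Sym2.ind with | _ u v => ?_
    have huv : u ≠ v := (hM.mem_edgeSet _ (mem_insert_self _ _)).ne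
    have hu := hM.mem_of_mem _ (mem_insert_self _ _) u (Sym2.mem_mk_left u v)
    have hv := hM.mem_of_mem _ (mem_insert_self _ _) v (Sym2.mem_mk_right u v)
    have hrest := hM.erase_erase (mem_insert_self _ _)
    rw [erase_insert he] at hrest
    have := ih hrest
    rw [card_insert_of_notMem he]
    have := card_erase_erase_add_two_s14 huv hu hv
    omega

end IsMatchingIn

lemma isMatchingIn_erase_iff :
    G.IsMatchingIn (S.erase u) M ↔ G.IsMatchingIn S M ∧ ∀ e ∈ M, u ∉ e := by
  constructor
  · intro hM
    exact ⟨⟨hM.mem_edgeSet, fun e he x hx => mem_of_mem_erase (hM.mem_of_mem e he x hx),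
      hM.notMem_of_ne⟩, fun e he hue => (mem_erase.1 (hM.mem_of_mem e he u hue)).1 rfl⟩
  · rintro ⟨hM, hu⟩
    refine ⟨hM.mem_edgeSet, fun e he x hx => mem_erase.2 ⟨?_, hM.mem_of_mem e he x hx⟩,
      hM.notMem_of_ne⟩
    rintro rfl; exact hu e he hx

variable (G) in
lemma matchPolyOn_monic (S : Finset V) : (G.matchPolyOn S).Monic := by
  have hempty : (∅ : Finset (Sym2 V)) ∈ G.matchingsIn S := by
    rw [mem_matchingsIn]; exact ⟨by simp, by simp, by simp⟩
  rw [matchPolyOn, ← add_sum_erase _ _ hempty]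
  simp only [card_empty, pow_zero, C_1, one_mul, mul_zero, Nat.sub_zero]
  refine (monic_X_pow _).add_of_left ?_
  rw [degree_X_pow]
  refine (degree_sum_le _ _).trans_lt ((Finset.sup_lt_iff (WithBot.bot_lt_coe _)).2 ?_)
  intro M hM
  obtain ⟨hne, hM⟩ := mem_erase.1 hM
  have := (mem_matchingsIn.1 hM).two_mul_card_le
  have := card_pos.2 (nonempty_iff_ne_empty.2 hne)
  exact (degree_C_mul_X_pow_le _ _).trans_lt
    (by exact_mod_cast (by omega : S.card - 2 * M.card < S.card))

lemma sum_filter_mk_mem_matchingsIn (h : G.Adj u v) (hu : u ∈ S) (hv : v ∈ S) :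
    ∑ M ∈ (G.matchingsIn S).filter (s(u, v) ∈ ·),
      C ((-1 : ℝ) ^ M.card) * X ^ (S.card - 2 * M.card) =
      -G.matchPolyOn ((S.erase u).erase v) := by
  rw [matchPolyOn, ← sum_neg_distrib]
  have hS := card_erase_erase_add_two_s14 h.ne hu hv
  refine sum_nbij' (·.erase s(u, v)) (insert s(u, v)) ?_ ?_ ?_ ?_ ?_
  · intro M hM
    rw [mem_filter, mem_matchingsIn] at hM
    exact mem_matchingsIn.2 (hM.1.erase_erase hM.2)
  · intro M hM
    exact mem_filter.2 ⟨mem_matchingsIn.2 ((mem_matchingsIn.1 hM).insert_mk h hu hv),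
      mem_insert_self _ _⟩
  · intro M hM
    exact insert_erase (mem_filter.1 hM).2
  · intro M hM
    exact erase_insert ((mem_matchingsIn.1 hM).mk_notMem_of_notMem (by simp))
  · intro M hM
    rw [mem_filter, mem_matchingsIn] at hM
    have := (hM.1.erase_erase hM.2).two_mul_card_le
    rw [← card_erase_add_one hM.2, pow_succ, C_mul, C_neg, C_1,
      show S.card - 2 * ((M.erase s(u, v)).card + 1) =
        ((S.erase u).erase v).card - 2 * (M.erase s(u, v)).card by omega]
    ring

lemma matchPolyOn_eq_deleteEdges_sub (h : G.Adj u v) (hu : u ∈ S) (hv : v ∈ S) :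
    G.matchPolyOn S =
      (G.deleteEdges {s(u, v)}).matchPolyOn S - G.matchPolyOn ((S.erase u).erase v) := by
  have hfilter : (G.matchingsIn S).filter (s(u, v) ∉ ·) =
      (G.deleteEdges {s(u, v)}).matchingsIn S := by
    ext M
    simp [isMatchingIn_deleteEdges_iff]
  rw [matchPolyOn, ← sum_filter_not_add_sum_filter _ (s(u, v) ∈ ·), hfilter,
    sum_filter_mk_mem_matchingsIn h hu hv, sub_eq_add_neg]
  rfl

lemma matchPolyOn_eq_X_mul_sub [DecidableRel G.Adj] (hu : u ∈ S) :
    G.matchPolyOn S = X * G.matchPolyOn (S.erase u) -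
      ∑ v ∈ S.filter (G.Adj u), G.matchPolyOn ((S.erase u).erase v) := by
  have huncovered : (G.matchingsIn S).filter (fun M => ∀ e ∈ M, u ∉ e) =
      G.matchingsIn (S.erase u) := by
    ext M
    simp [isMatchingIn_erase_iff]
  have hcovered : (G.matchingsIn S).filter (fun M => ¬∀ e ∈ M, u ∉ e) =
      (S.filter (G.Adj u)).biUnion (fun v => (G.matchingsIn S).filter (s(u, v) ∈ ·)) := by
    ext M
    simp only [mem_filter, mem_biUnion, mem_matchingsIn, not_forall, not_not, exists_prop]
    constructor
    · rintro ⟨hM, e, he, hue⟩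
      have hvS := hM.mem_of_mem e he _ (Sym2.other_mem hue)
      rw [← Sym2.other_spec hue] at he
      exact ⟨_, ⟨hvS, (G.mem_edgeSet).1 (hM.mem_edgeSet _ he)⟩, hM, he⟩
    · rintro ⟨v, -, hM, he⟩
      exact ⟨hM, _, he, Sym2.mem_mk_left u v⟩
  have hdisj : (S.filter (G.Adj u) : Set V).PairwiseDisjoint
      (fun v => (G.matchingsIn S).filter (s(u, v) ∈ ·)) := by
    intro v _ w _ hvw
    refine Finset.disjoint_left.2 fun M hMv hMw => ?_
    simp only [mem_filter, mem_matchingsIn] at hMv hMw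
    obtain ⟨hM, hv⟩ := hMv
    exact hM.notMem_of_ne _ hv _ hMw.2 (fun h => hvw (Sym2.congr_right.1 h)) u
      (Sym2.mem_mk_left u v) (Sym2.mem_mk_left u w)
  have hS := card_erase_add_one hu
  rw [matchPolyOn, ← sum_filter_add_sum_filter_not _ (fun M => ∀ e ∈ M, u ∉ e), huncovered,
    hcovered, sum_biUnion hdisj, matchPolyOn, mul_sum, sub_eq_add_neg, ← sum_neg_distrib]
  congr 1
  · refine sum_congr rfl fun M hM => ?_
    have := (mem_matchingsIn.1 hM).two_mul_card_le
    rw [show S.card - 2 * M.card = (S.erase u).card - 2 * M.card + 1 by omega, pow_succ]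
    ring
  · refine sum_congr rfl fun v hv => ?_
    obtain ⟨hvS, huv⟩ := mem_filter.1 hv
    exact sum_filter_mk_mem_matchingsIn huv hu hvS

lemma eval_matchPolyOn_erase_pos {S : Finset V}
    (hS : ∀ y, x < y → 0 < (G.matchPolyOn S).eval y) (u : V) :
    ∀ y, x < y → 0 < (G.matchPolyOn (S.erase u)).eval y := by
  classical
  induction S using Finset.strongInduction generalizing u x with | H S ih => ?_
  by_cases hu : u ∈ S
  swap
  · rwa [erase_eq_of_notMem hu]
  intro y hy
  by_contra! hle
  set r := sSup {z | (G.matchPolyOn (S.erase u)).eval z = 0}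
  obtain ⟨hyr, hr⟩ := (G.matchPolyOn_monic _).le_sSup_roots_of_eval_nonpos hle
  have hpos : ∀ z, r < z → 0 < (G.matchPolyOn (S.erase u)).eval z :=
    fun z => (G.matchPolyOn_monic _).eval_pos_of_sSup_roots_lt
  have hnonneg : ∀ v ∈ S.filter (G.Adj u), 0 ≤ (G.matchPolyOn ((S.erase u).erase v)).eval r :=
    fun v _ => by
      simpa using eval_le_eval_of_forall_gt (p := 0)
        fun z hz => by simpa using (ih _ (erase_ssubset hu) hpos v z hz).le
  have hrec := congrArg (eval r) (matchPolyOn_eq_X_mul_sub (G := G) hu)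
  rw [eval_sub, eval_mul, eval_X, hr, mul_zero, zero_sub, eval_finsetSum] at hrec
  have := hS r (hy.trans_le hyr)
  linarith [sum_nonneg hnonneg]

end DecidableEq

variable [Fintype V]

variable (G) in
lemma matchingCount_eq_card_filter (k : ℕ) :
    matchingCount G k = ((G.matchingsIn univ).filter (·.card = k)).card := by
  classical
  rw [matchingCount, Nat.card_eq_fintype_card, Fintype.card_subtype]
  congr 1
  ext M
  simp only [mem_filter, mem_univ, true_and, mem_matchingsIn]
  exact ⟨fun ⟨hk, hE, hD⟩ => ⟨⟨hE, fun _ _ _ _ => mem_univ _, hD⟩, hk⟩,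
    fun ⟨hM, hk⟩ => ⟨hk, hM.mem_edgeSet, hM.notMem_of_ne⟩⟩

variable (G) in
lemma matchPoly_eq_matchPolyOn_univ :
    matchPoly G = G.matchPolyOn univ := by
  classical
  have hmaps : ∀ M ∈ G.matchingsIn univ, M.card ∈ range (Fintype.card V + 1) := fun M hM => by
    have := (mem_matchingsIn.1 hM).two_mul_card_le
    rw [card_univ] at this
    rw [mem_range]
    omega
  rw [matchPolyOn, ← sum_fiberwise_of_maps_to hmaps, matchPoly]
  refine sum_congr rfl fun k _ => ?_
  rw [sum_congr rfl fun M hM => by rw [(mem_filter.1 hM).2], sum_const,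
    ← matchingCount_eq_card_filter, card_univ, nsmul_eq_mul, C_mul]
  simp only [map_natCast]
  ring

variable (G) in
lemma matchPoly_monic : (matchPoly G).Monic := by
  classical
  exact G.matchPoly_eq_matchPolyOn_univ ▸ G.matchPolyOn_monic univ

lemma eval_matchPoly_le_deleteEdges_singleton (e : Sym2 V)
    (hpos : ∀ y, x < y → 0 < (matchPoly G).eval y) :
    ∀ y, x < y → (matchPoly G).eval y ≤ (matchPoly (G.deleteEdges {e})).eval y := by
  classical
  by_cases he : e ∈ G.edgeSet
  swap
  · rw [deleteEdges_eq_self.2 (Set.disjoint_singleton_right.2 he)]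
    exact fun y _ => le_rfl
  induction e using Sym2.ind with | _ u v => ?_
  intro y hy
  simp only [matchPoly_eq_matchPolyOn_univ] at hpos ⊢
  have hrec := congrArg (eval y) (matchPolyOn_eq_deleteEdges_sub he (mem_univ u) (mem_univ v))
  rw [eval_sub] at hrec
  have := eval_matchPolyOn_erase_pos (eval_matchPolyOn_erase_pos hpos u) v y hy
  linarith

lemma eval_matchPoly_le_deleteEdges (s : Set (Sym2 V))
    (hpos : ∀ y, x < y → 0 < (matchPoly G).eval y) :
    ∀ y, x < y → (matchPoly G).eval y ≤ (matchPoly (G.deleteEdges s)).eval y := by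
  induction s, s.toFinite using Set.Finite.induction_on generalizing G with
  | empty => simp
  | @insert e s _ _ ih =>
    intro y hy
    have hle := eval_matchPoly_le_deleteEdges_singleton e hpos
    rw [Set.insert_eq, ← deleteEdges_deleteEdges]
    exact (hle y hy).trans (ih (fun z hz => (hpos z hz).trans_le (hle z hz)) y hy)

end SimpleGraph

/-- If `H` is a spanning subgraph of `G`, then `G ⪰ H`:
`m(H,x) ≥ m(G,x)` for all `x ≥ t(G)`. -/
theorem gsucceq_of_spanning_subgraph {V : Type*} [Fintype V]
    (G H : SimpleGraph V) (hHG : H ≤ G) :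
    ∀ x : ℝ, maxRoot G ≤ x → (matchPoly G).eval x ≤ (matchPoly H).eval x := by
  intro x hx
  have hpos : ∀ y, maxRoot G < y → 0 < (matchPoly G).eval y :=
    fun y => G.matchPoly_monic.eval_pos_of_sSup_roots_lt
  have hle := G.eval_matchPoly_le_deleteEdges (G.edgeSet \ H.edgeSet) hpos
  rw [G.deleteEdges_sdiff_eq_of_le hHG] at hle
  exact eval_le_eval_of_forall_gt fun y hy => hle y (hx.trans_lt hy)
end
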